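/- arXiv:1305.4260 — 9 statements merged into one kernel-verified Lean document; each statement's English description precedes it below -/
import Mathlib

section
/- For tropical matrices A ∈ T^{n×n} and B ∈ T^{n×n} over the max-plus semiring T = ℝ ∪ {-∞}, if the tropical product A⊙B is tropically non-singular, then both A and B are tropically non-singular, the unique maximizing permutation of A⊙B equals τ_B ∘ τ_A, and per(A⊙B) = per(A) + per(B). -/
/-- The max-plus (tropical) semiring `T = ℝ ∪ {-∞}`. -/
abbrev T : Type := WithBot ℝ

/-- Tropical matrix product. -/
noncomputable def tmul {n m k : ℕ} (A : Fin n → Fin m → T) (B : Fin m → Fin k → T) :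
    Fin n → Fin k → T :=
  fun i j => Finset.univ.sup fun l => A i l + B l j

/-- Tropical matrix-vector product. -/
noncomputable def tmulVec {n m : ℕ} (A : Fin n → Fin m → T) (u : Fin m → T) : Fin n → T :=
  fun i => Finset.univ.sup fun j => A i j + u j

/-- Tropical identity matrix. -/
noncomputable def tId (n : ℕ) : Fin n → Fin n → T :=
  fun i j => if i = j then (0 : T) else ⊥

/-- Tropical matrix powers. -/
noncomputable def tpow {n : ℕ} (A : Fin n → Fin n → T) : ℕ → (Fin n → Fin n → T)
  | 0 => tId n
  | (m + 1) => tmul (tpow A m) A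

/-- Tropical product of a list of matrices (empty product = identity). -/
noncomputable def tProd {n : ℕ} : List (Fin n → Fin n → T) → (Fin n → Fin n → T)
  | [] => tId n
  | (M :: L) => tmul M (tProd L)

/-- Weight of a permutation. -/
noncomputable def wt {n : ℕ} (A : Fin n → Fin n → T) (σ : Equiv.Perm (Fin n)) : T :=
  ∑ i, A i (σ i)

/-- Tropical permanent. -/
noncomputable def per {n : ℕ} (A : Fin n → Fin n → T) : T :=
  Finset.univ.sup fun σ : Equiv.Perm (Fin n) => wt A σ

/-- Tropical non-singularity: finite permanent attained by a unique permutation. -/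
def NonSingular {n : ℕ} (A : Fin n → Fin n → T) : Prop :=
  per A ≠ ⊥ ∧ ∃! σ : Equiv.Perm (Fin n), wt A σ = per A

/-- Weight of the circuit `c 0 → c 1 → ⋯ → c ℓ → c 0` (length `ℓ+1`). -/
noncomputable def cwt {n ℓ : ℕ} (A : Fin n → Fin n → T) (c : Fin (ℓ + 1) → Fin n) : T :=
  ∑ k : Fin (ℓ + 1), A (c k) (c (k + 1))

/-- `ρ(A) = r`: some circuit has mean weight `r`, and every circuit has mean weight `≤ r`. -/
def RhoEq {n : ℕ} (A : Fin n → Fin n → T) (r : ℝ) : Prop :=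
  (∃ ℓ, ∃ c : Fin (ℓ + 1) → Fin n, cwt A c = ((((ℓ : ℝ) + 1) * r : ℝ) : T)) ∧
  ∀ ℓ, ∀ c : Fin (ℓ + 1) → Fin n, cwt A c ≤ ((((ℓ : ℝ) + 1) * r : ℝ) : T)

/-- `(i,j)` is an arc of the critical graph (lies on a circuit of mean weight `r = ρ(A)`). -/
def CritArc {n : ℕ} (A : Fin n → Fin n → T) (r : ℝ) (i j : Fin n) : Prop :=
  ∃ ℓ, ∃ c : Fin (ℓ + 1) → Fin n, cwt A c = ((((ℓ : ℝ) + 1) * r : ℝ) : T) ∧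
    ∃ k : Fin (ℓ + 1), c k = i ∧ c (k + 1) = j

/-- `i` is a node of the critical graph. -/
def CritNode {n : ℕ} (A : Fin n → Fin n → T) (r : ℝ) (i : Fin n) : Prop :=
  ∃ ℓ, ∃ c : Fin (ℓ + 1) → Fin n, cwt A c = ((((ℓ : ℝ) + 1) * r : ℝ) : T) ∧
    ∃ k : Fin (ℓ + 1), c k = i

/-- Reachability in the critical graph. -/
def CritReach {n : ℕ} (A : Fin n → Fin n → T) (r : ℝ) : Fin n → Fin n → Prop :=
  Relation.ReflTransGen (fun i j => CritArc A r i j)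

/-- Same strongly connected component of the critical graph. -/
def SameScc {n : ℕ} (A : Fin n → Fin n → T) (r : ℝ) (i j : Fin n) : Prop :=
  CritReach A r i j ∧ CritReach A r j i

/-- `R` is a set of representatives, one per scc of the critical graph. -/
def SccReps {n : ℕ} (A : Fin n → Fin n → T) (r : ℝ) (R : Finset (Fin n)) : Prop :=
  (∀ i ∈ R, CritNode A r i) ∧
  (∀ i ∈ R, ∀ j ∈ R, i ≠ j → ¬ SameScc A r i j) ∧
  (∀ j, CritNode A r j → ∃ i ∈ R, SameScc A r i j)

/-- Cyclicity of the scc of the critical graph containing `i`: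
the gcd (greatest common divisor) of the lengths of the critical circuits through `i`. -/
noncomputable def cycAt {n : ℕ} (A : Fin n → Fin n → T) (r : ℝ) (i : Fin n) : ℕ :=
  sSup {d : ℕ | ∀ ℓ : ℕ,
    (∃ c : Fin (ℓ + 1) → Fin n, cwt A c = ((((ℓ : ℝ) + 1) * r : ℝ) : T) ∧ c 0 = i) →
    d ∣ (ℓ + 1)}

/-- `A` has an `r × r` tropically non-singular submatrix. -/
def HasNSsub {n m : ℕ} (A : Fin n → Fin m → T) (r : ℕ) : Prop :=
  ∃ f : Fin r → Fin n, ∃ g : Fin r → Fin m,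
    Function.Injective f ∧ Function.Injective g ∧
    NonSingular (fun i j => A (f i) (g j))

/-- Tropical rank: maximal size of a tropically non-singular square submatrix. -/
noncomputable def trrk {n m : ℕ} (A : Fin n → Fin m → T) : ℕ :=
  sSup {r : ℕ | HasNSsub A r}

/-- Tropical convex hull (span) of a finite family of vectors of `T^n`. -/
def tSpan {n m : ℕ} (v : Fin m → (Fin n → T)) : Set (Fin n → T) :=
  { w | ∃ α : Fin m → T, w = fun i => Finset.univ.sup fun j => α j + v j i }

/-- Weak dimension of a tropically convex set: minimal size of a generating family. -/
noncomputable def weakDim {n : ℕ} (X : Set (Fin n → T)) : ℕ :=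
  sInf {k : ℕ | ∃ v : Fin k → (Fin n → T), tSpan v = X}

/-- Column rank: weak dimension of the tropical convex hull of the columns. -/
noncomputable def colrk {n m : ℕ} (A : Fin n → Fin m → T) : ℕ :=
  weakDim (tSpan fun j => fun i => A i j)

/-- Row rank: weak dimension of the tropical convex hull of the rows. -/
noncomputable def rowrk {n m : ℕ} (A : Fin n → Fin m → T) : ℕ :=
  weakDim (tSpan fun i => fun j => A i j)

section Aux

/-- Value of a (permutation, choice function) pair. -/
noncomputable def Vv {n : ℕ} (A B : Fin n → Fin n → T) (σ : Equiv.Perm (Fin n))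
    (f : Fin n → Fin n) : T :=
  ∑ i, (A i (f i) + B (f i) (σ i))

lemma Vv_le_wt_tmul {n : ℕ} (A B : Fin n → Fin n → T) (σ : Equiv.Perm (Fin n))
    (f : Fin n → Fin n) : Vv A B σ f ≤ wt (tmul A B) σ := by
  refine Finset.sum_le_sum fun i _ => ?_
  exact Finset.le_sup (f := fun l => A i l + B l (σ i)) (Finset.mem_univ (f i))

lemma wt_tmul_exists_Vv {n : ℕ} (A B : Fin n → Fin n → T) (σ : Equiv.Perm (Fin n)) :
    ∃ f : Fin n → Fin n, wt (tmul A B) σ = Vv A B σ f := by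
  have h : ∀ i : Fin n, ∃ l : Fin n, tmul A B i (σ i) = A i l + B l (σ i) := by
    intro i
    have : Nonempty (Fin n) := ⟨i⟩
    obtain ⟨l, _, hl⟩ := Finset.exists_mem_eq_sup Finset.univ Finset.univ_nonempty
      (fun l => A i l + B l (σ i))
    exact ⟨l, hl⟩
  choose f hf using h
  exact ⟨f, Finset.sum_congr rfl fun i _ => hf i⟩

lemma exists_wt_eq_per {n : ℕ} (C : Fin n → Fin n → T) :
    ∃ σ : Equiv.Perm (Fin n), wt C σ = per C := by
  obtain ⟨σ, _, hσ⟩ := Finset.exists_mem_eq_sup Finset.univ ⟨1, Finset.mem_univ 1⟩ (wt C)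
  exact ⟨σ, hσ.symm⟩

lemma Vv_decomp {n : ℕ} (A B : Fin n → Fin n → T) (σ : Equiv.Perm (Fin n))
    (f : Fin n → Fin n) :
    Vv A B σ f = (∑ i, A i (f i)) + ∑ i, B (f i) (σ i) := by
  unfold Vv; rw [Finset.sum_add_distrib]

lemma Vv_pair {n : ℕ} (A B : Fin n → Fin n → T) (σ1 σ2 : Equiv.Perm (Fin n)) :
    Vv A B (σ2 * σ1) ⇑σ1 = wt A σ1 + wt B σ2 := by
  rw [Vv_decomp]
  unfold wt
  congr 1
  have := Equiv.sum_comp σ1 (fun j => B j (σ2 j))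
  rw [← this]
  exact Finset.sum_congr rfl fun i _ => rfl

lemma Vv_swap {n : ℕ} (A B : Fin n → Fin n → T) (σ : Equiv.Perm (Fin n))
    (f : Fin n → Fin n) {a b : Fin n} (hab : a ≠ b) (hf : f a = f b) :
    Vv A B (σ * Equiv.swap a b) f = Vv A B σ f := by
  have hfs : ∀ i, f (Equiv.swap a b i) = f i := by
    intro i
    rcases eq_or_ne i a with rfl | ha
    · rw [Equiv.swap_apply_left, ← hf]
    rcases eq_or_ne i b with rfl | hb
    · rw [Equiv.swap_apply_right, hf]
    · rw [Equiv.swap_apply_of_ne_of_ne ha hb]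
  rw [Vv_decomp, Vv_decomp]
  congr 1
  simp only [Equiv.Perm.mul_apply]
  have hcomp := Equiv.sum_comp (Equiv.swap a b)
    (fun i => B (f i) (σ ((Equiv.swap a b) i)))
  rw [← hcomp]
  refine Finset.sum_congr rfl fun i _ => ?_
  rw [hfs, Equiv.swap_apply_self]

end Aux

/-- If `A ⊙ B` is tropically non-singular, then so are `A` and `B`,
the maximizing permutation of `A ⊙ B` is `τ_B ∘ τ_A`, and `per(A⊙B) = per(A) + per(B)`. -/
theorem stmt0 {n : ℕ} (A B : Fin n → Fin n → T) (h : NonSingular (tmul A B)) :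
    NonSingular A ∧ NonSingular B ∧
    (∀ τA τB τAB : Equiv.Perm (Fin n),
      wt A τA = per A → wt B τB = per B → wt (tmul A B) τAB = per (tmul A B) →
      τAB = τB * τA) ∧
    per (tmul A B) = per A + per B := by
  obtain ⟨hne, τ, hτ, huniq⟩ := h
  -- any permutation attaining per (tmul A B) equals τ
  have hu : ∀ σ : Equiv.Perm (Fin n), wt (tmul A B) σ = per (tmul A B) → σ = τ := huniq
  -- per A + per B ≤ per (tmul A B)
  obtain ⟨σA, hσA⟩ := exists_wt_eq_per A
  obtain ⟨σB, hσB⟩ := exists_wt_eq_per B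
  have hge : per A + per B ≤ per (tmul A B) := by
    calc per A + per B = Vv A B (σB * σA) ⇑σA := by rw [Vv_pair, hσA, hσB]
      _ ≤ wt (tmul A B) (σB * σA) := Vv_le_wt_tmul A B _ _
      _ ≤ per (tmul A B) := Finset.le_sup (Finset.mem_univ _)
  -- key: if a pair attains per (tmul A B), its choice function is injective
  have finj : ∀ (σ : Equiv.Perm (Fin n)) (f : Fin n → Fin n),
      Vv A B σ f = per (tmul A B) → Function.Injective f := by
    intro σ f hVf a b hfab
    by_contra hab
    have hmax : ∀ σ' : Equiv.Perm (Fin n), Vv A B σ' f = per (tmul A B) → σ' = τ := by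
      intro σ' hσ'
      refine hu σ' (le_antisymm (Finset.le_sup (Finset.mem_univ _)) ?_)
      rw [← hσ']; exact Vv_le_wt_tmul A B _ _
    have h1 : σ = τ := hmax σ hVf
    have h2 : σ * Equiv.swap a b = τ := by
      refine hmax _ ?_
      rw [Vv_swap A B σ f hab hfab]; exact hVf
    have h3 : σ * Equiv.swap a b = σ * 1 := by rw [mul_one, h2, h1]
    have h4 : Equiv.swap a b = 1 := mul_left_cancel h3
    have h5 := congrArg (fun e : Equiv.Perm (Fin n) => e b) h4
    simp [Equiv.swap_apply_right] at h5
    exact hab h5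
  -- extract a maximizing pair for τ
  obtain ⟨f0, hf0⟩ := wt_tmul_exists_Vv A B τ
  have hVf0 : Vv A B τ f0 = per (tmul A B) := by rw [← hf0, hτ]
  have hf0inj : Function.Injective f0 := finj τ f0 hVf0
  have hf0bij : Function.Bijective f0 := (Finite.injective_iff_bijective).1 hf0inj
  set π : Equiv.Perm (Fin n) := Equiv.ofBijective f0 hf0bij with hπ
  have hπa : ∀ i, π i = f0 i := fun i => rfl
  set β : Equiv.Perm (Fin n) := τ * π⁻¹ with hβ
  have hβπ : β * π = τ := by rw [hβ]; group
  -- decompose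
  have hXwt : (∑ i, A i (f0 i)) = wt A π := by
    unfold wt; exact Finset.sum_congr rfl fun i _ => by rw [hπa]
  have hYwt : (∑ i, B (f0 i) (τ i)) = wt B β := by
    unfold wt
    have := Equiv.sum_comp π (fun j => B j (β j))
    rw [← this]
    refine Finset.sum_congr rfl fun i _ => ?_
    have h2 : β (π i) = τ i := by rw [hβ]; simp
    rw [h2, hπa]
  have hdec : per (tmul A B) = wt A π + wt B β := by
    rw [← hVf0, Vv_decomp, hXwt, hYwt]
  -- boundedness
  have hXle : wt A π ≤ per A := Finset.le_sup (Finset.mem_univ _)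
  have hYle : wt B β ≤ per B := Finset.le_sup (Finset.mem_univ _)
  -- nonbot
  have hXY : wt A π + wt B β ≠ ⊥ := by rw [← hdec]; exact hne
  have hXne : wt A π ≠ ⊥ := fun hx => hXY (by rw [hx]; exact WithBot.bot_add _)
  have hYne : wt B β ≠ ⊥ := fun hy => hXY (by rw [hy]; exact WithBot.add_bot _)
  have hPAne : per A ≠ ⊥ := fun hp => hXne (le_bot_iff.1 (hp ▸ hXle))
  have hPBne : per B ≠ ⊥ := fun hp => hYne (le_bot_iff.1 (hp ▸ hYle))
  -- lift to ℝ to conclude wt A π = per A, wt B β = per B, and the product formula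
  obtain ⟨x, hx⟩ := WithBot.ne_bot_iff_exists.1 hXne
  obtain ⟨y, hy⟩ := WithBot.ne_bot_iff_exists.1 hYne
  obtain ⟨pa, hpa⟩ := WithBot.ne_bot_iff_exists.1 hPAne
  obtain ⟨pb, hpb⟩ := WithBot.ne_bot_iff_exists.1 hPBne
  have hle1 : x ≤ pa := by rw [← WithBot.coe_le_coe, hx, hpa]; exact hXle
  have hle2 : y ≤ pb := by rw [← WithBot.coe_le_coe, hy, hpb]; exact hYle
  have hle3 : pa + pb ≤ x + y := by
    rw [← WithBot.coe_le_coe, WithBot.coe_add, WithBot.coe_add, hx, hy, hpa, hpb, ← hdec]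
    exact hge
  have hxa : x = pa := le_antisymm hle1 (by linarith)
  have hyb : y = pb := le_antisymm hle2 (by linarith)
  have hAmax : wt A π = per A := by rw [← hx, ← hpa, hxa]
  have hBmax : wt B β = per B := by rw [← hy, ← hpb, hyb]
  have hprod : per (tmul A B) = per A + per B := by
    rw [hdec, hAmax, hBmax]
  -- uniqueness for A
  have hAuniq : ∀ σ : Equiv.Perm (Fin n), wt A σ = per A → σ = π := by
    intro σ hσ
    have : wt (tmul A B) (β * σ) = per (tmul A B) := by
      refine le_antisymm (Finset.le_sup (Finset.mem_univ _)) ?_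
      calc per (tmul A B) = per A + per B := hprod
        _ = Vv A B (β * σ) ⇑σ := by rw [Vv_pair, hσ, hBmax]
        _ ≤ wt (tmul A B) (β * σ) := Vv_le_wt_tmul A B _ _
    have h1 : β * σ = τ := hu _ this
    have h2 : β * π = τ := hβπ
    exact mul_left_cancel (h1.trans h2.symm)
  -- uniqueness for B
  have hBuniq : ∀ σ : Equiv.Perm (Fin n), wt B σ = per B → σ = β := by
    intro σ hσ
    have : wt (tmul A B) (σ * π) = per (tmul A B) := by
      refine le_antisymm (Finset.le_sup (Finset.mem_univ _)) ?_
      calc per (tmul A B) = per A + per B := hprod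
        _ = Vv A B (σ * π) ⇑π := by rw [Vv_pair, hσ, hAmax]
        _ ≤ wt (tmul A B) (σ * π) := Vv_le_wt_tmul A B _ _
    have h1 : σ * π = τ := hu _ this
    have h2 : β * π = τ := hβπ
    exact mul_right_cancel (h1.trans h2.symm)
  refine ⟨⟨hPAne, π, hAmax, hAuniq⟩, ⟨hPBne, β, hBmax, hBuniq⟩, ?_, hprod⟩
  intro τA τB τAB hτA hτB hτAB
  rw [hu τAB hτAB, hAuniq τA hτA, hBuniq τB hτB, hβπ]
end

section
/- For a tropical matrix A ∈ T^{n×n}, the maximal cycle mean ρ(A) = max over simple circuits (i_1,…,i_j,i_1) in the graph of A of (A_{i_1 i_2} + ⋯ + A_{i_j i_1})/j is the maximal tropical eigenvalue of A: there exists a vector u ∈ T^n \ {(-∞,…,-∞)} with A⊙u = ρ(A)⊙u whenever ρ(A) ≠ -∞, and every tropical eigenvalue λ of A satisfies λ ≤ ρ(A). -/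
/-!
Subtracting `ρ` from every entry gives a matrix `B` whose circuits all have weight `≤ 0`, one of
them, through a node `j`, of weight `0`. Cutting closed subwalks out of a walk then never lowers
its weight, so walks of length at most `n` already realise the best walk weights, and column `j`
of the Kleene plus `B ⊕ B² ⊕ ⋯ ⊕ Bⁿ` is a fixed vector of `B` because its `j`-th entry is `≥ 0`.

Conversely, if `A ⊙ u = λ ⊙ u` with `λ` finite, then from every finite entry `u i` an index `j`
attaining the maximum in `(A ⊙ u)_i` leads to another finite entry with `λ + u i ≤ A i j + u j`.
Iterating gives an infinite walk, which revisits some node; summing the inequalities along the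
circuit in between bounds `λ` by the mean weight of that circuit.
-/

open Finset

namespace MaxPlus

section Walks

variable {ι M : Type*}

/-- Walks are sequences `ℕ → ι`, of which only the first `m + 1` vertices are read. -/
def walkWeight [AddCommMonoid M] (B : ι → ι → M) (m : ℕ) (v : ℕ → ι) : M :=
  ∑ k ∈ range m, B (v k) (v (k + 1))

def cutSegment (v : ℕ → ι) (p d : ℕ) : ℕ → ι :=
  fun k => if k < p then v k else v (k + d)

lemma cutSegment_zero {v : ℕ → ι} {p d : ℕ} (hv : v (p + d) = v p) :
    cutSegment v p d 0 = v 0 := by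
  rcases Nat.eq_zero_or_pos p with rfl | hp
  · simpa [cutSegment] using hv
  · simp [cutSegment, hp]

lemma exists_lt_le_card_eq [Fintype ι] (v : ℕ → ι) :
    ∃ p q, p < q ∧ q ≤ Fintype.card ι ∧ v p = v q := by
  obtain ⟨a, b, hab, he⟩ :=
    Fintype.exists_ne_map_eq_of_card_lt (fun k : Fin (Fintype.card ι + 1) => v k) (by simp)
  rcases lt_or_gt_of_ne (Fin.val_ne_of_ne hab) with h | h
  · exact ⟨a, b, h, Nat.lt_succ_iff.mp b.2, he⟩
  · exact ⟨b, a, h, Nat.lt_succ_iff.mp a.2, he.symm⟩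

variable [AddCommMonoid M] (B : ι → ι → M)

lemma walkWeight_succ (m : ℕ) (v : ℕ → ι) :
    walkWeight B (m + 1) v = walkWeight B m v + B (v m) (v (m + 1)) :=
  sum_range_succ _ _

lemma walkWeight_succ' (m : ℕ) (v : ℕ → ι) :
    walkWeight B (m + 1) v = B (v 0) (v 1) + walkWeight B m (fun k => v (k + 1)) := by
  rw [walkWeight, sum_range_succ', add_comm]
  rfl

lemma walkWeight_add (a b : ℕ) (v : ℕ → ι) :
    walkWeight B (a + b) v = walkWeight B a v + walkWeight B b (fun k => v (a + k)) :=
  sum_range_add _ _ _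

lemma walkWeight_congr {m : ℕ} {v w : ℕ → ι} (h : ∀ k ≤ m, v k = w k) :
    walkWeight B m v = walkWeight B m w :=
  sum_congr rfl fun k hk => by
    rw [h k (mem_range.mp hk).le, h (k + 1) (mem_range.mp hk)]

lemma walkWeight_cutSegment_add {v : ℕ → ι} {p d : ℕ} (hv : v (p + d) = v p) (e : ℕ) :
    walkWeight B (p + e) (cutSegment v p d) + walkWeight B d (fun k => v (p + k)) =
      walkWeight B (p + d + e) v := by
  have hhead : walkWeight B p (cutSegment v p d) = walkWeight B p v :=
    walkWeight_congr B fun k hk => by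
      rcases hk.lt_or_eq with hk | rfl
      · simp [cutSegment, hk]
      · simp [cutSegment, hv]
  have htail : walkWeight B e (fun k => cutSegment v p d (p + k)) =
      walkWeight B e (fun k => v (p + d + k)) :=
    walkWeight_congr B fun k _ => by simp [cutSegment, Nat.add_right_comm]
  rw [walkWeight_add B p e, walkWeight_add B (p + d) e, walkWeight_add B p d, hhead, htail,
    add_right_comm]

lemma nsmul_add_le_walkWeight_add [PartialOrder M] [IsOrderedAddMonoid M] {u : ι → M} {lam : M}
    {v : ℕ → ι} (hv : ∀ k, lam + u (v k) ≤ B (v k) (v (k + 1)) + u (v (k + 1))) (m : ℕ) :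
    m • lam + u (v 0) ≤ walkWeight B m v + u (v m) := by
  induction m with
  | zero => simp [walkWeight]
  | succ m ih =>
    calc (m + 1) • lam + u (v 0) = lam + (m • lam + u (v 0)) := by rw [succ_nsmul', add_assoc]
      _ ≤ lam + (walkWeight B m v + u (v m)) := by gcongr
      _ = walkWeight B m v + (lam + u (v m)) := add_left_comm _ _ _
      _ ≤ walkWeight B m v + (B (v m) (v (m + 1)) + u (v (m + 1))) :=
          add_le_add le_rfl (hv m)
      _ = walkWeight B (m + 1) v + u (v (m + 1)) := by rw [walkWeight_succ, add_assoc]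

end Walks

lemma add_finset_sup {ι : Type*} (s : Finset ι) (f : ι → T) (c : T) :
    c + s.sup f = s.sup fun j => c + f j := by
  simpa [Function.comp_def] using Finset.apply_sup_eq_sup_comp (s := s) (f := f) (c + ·)
    (fun x y => Monotone.map_max fun a b hab => add_le_add_right hab c) (by simp)

section BestWalk

variable {ι : Type*} [Fintype ι] [DecidableEq ι]

/-- `bestWalk B j m i = (Bᵐ)ᵢⱼ`. -/
noncomputable def bestWalk (B : ι → ι → T) (j : ι) : ℕ → ι → T
  | 0 => fun i => if i = j then 0 else ⊥
  | m + 1 => fun i => univ.sup fun k => B i k + bestWalk B j m k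

lemma walkWeight_le_bestWalk (B : ι → ι → T) (j : ι) (m : ℕ) (v : ℕ → ι) (hv : v m = j) :
    walkWeight B m v ≤ bestWalk B j m (v 0) := by
  induction m generalizing v with
  | zero => simp [walkWeight, bestWalk, hv]
  | succ m ih =>
    calc walkWeight B (m + 1) v = B (v 0) (v 1) + walkWeight B m (fun k => v (k + 1)) :=
          walkWeight_succ' B m v
      _ ≤ B (v 0) (v 1) + bestWalk B j m (v 1) := by gcongr; exact ih _ hv
      _ ≤ bestWalk B j (m + 1) (v 0) :=
          le_sup (f := fun k => B (v 0) k + bestWalk B j m k) (mem_univ _)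

lemma exists_walkWeight_eq_bestWalk (B : ι → ι → T) (j : ι) (m : ℕ) (i : ι)
    (hi : bestWalk B j m i ≠ ⊥) :
    ∃ v : ℕ → ι, v 0 = i ∧ v m = j ∧ walkWeight B m v = bestWalk B j m i := by
  induction m generalizing i with
  | zero =>
    obtain rfl : i = j := by
      by_contra h
      simp [bestWalk, h] at hi
    exact ⟨fun _ => i, rfl, rfl, by simp [walkWeight, bestWalk]⟩
  | succ m ih =>
    obtain ⟨k, -, hk⟩ :=
      exists_mem_eq_sup univ ⟨i, mem_univ i⟩ fun k => B i k + bestWalk B j m k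
    change bestWalk B j (m + 1) i = B i k + bestWalk B j m k at hk
    have hk_ne : bestWalk B j m k ≠ ⊥ := fun hbot => hi (by rw [hk, hbot, WithBot.add_bot])
    obtain ⟨v, hv0, hvm, hv⟩ := ih k hk_ne
    refine ⟨fun t => Nat.casesOn t i v, rfl, hvm, ?_⟩
    rw [walkWeight_succ', hk]
    change B i (v 0) + walkWeight B m v = _
    rw [hv0, hv]

end BestWalk

lemma walkWeight_eq_cwt {n : ℕ} (B : Fin n → Fin n → T) (ℓ : ℕ) (v : ℕ → Fin n)
    (hv : v (ℓ + 1) = v 0) :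
    walkWeight B (ℓ + 1) v = cwt B (fun k : Fin (ℓ + 1) => v k) := by
  rw [walkWeight, ← Fin.sum_univ_eq_sum_range (fun k => B (v k) (v (k + 1)))]
  refine sum_congr rfl fun k _ => ?_
  by_cases hk : k = Fin.last ℓ
  · subst hk
    simp [hv]
  · change _ = B (v k) (v ((k + 1 : Fin (ℓ + 1)) : ℕ))
    rw [Fin.val_add_one_of_lt (Fin.lt_last_iff_ne_last.mpr hk)]

section NonposCycles

variable {n : ℕ}

def CyclesNonpos (B : Fin n → Fin n → T) : Prop :=
  ∀ ℓ (c : Fin (ℓ + 1) → Fin n), cwt B c ≤ 0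

variable {B : Fin n → Fin n → T}

lemma exists_shorter_walk (hB : CyclesNonpos B) {m : ℕ} (hm : n < m) (v : ℕ → Fin n) :
    ∃ m' w, 0 < m' ∧ m' < m ∧ w 0 = v 0 ∧ w m' = v m ∧
      walkWeight B m v ≤ walkWeight B m' w := by
  obtain ⟨p, q, hpq, hq, hvpq⟩ := exists_lt_le_card_eq v
  rw [Fintype.card_fin] at hq
  obtain ⟨ℓ, rfl⟩ : ∃ ℓ, q = p + (ℓ + 1) := ⟨q - p - 1, by omega⟩
  obtain ⟨e, rfl⟩ : ∃ e, m = p + (ℓ + 1) + e := ⟨m - (p + (ℓ + 1)), by omega⟩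
  have hcyc : walkWeight B (ℓ + 1) (fun k => v (p + k)) ≤ 0 := by
    rw [walkWeight_eq_cwt B ℓ _ (by simpa using hvpq.symm)]
    exact hB ℓ _
  refine ⟨p + e, cutSegment v p (ℓ + 1), by omega, by omega, cutSegment_zero hvpq.symm,
    by simp [cutSegment, Nat.add_right_comm], ?_⟩
  rw [← walkWeight_cutSegment_add B hvpq.symm e]
  calc _ ≤ walkWeight B (p + e) (cutSegment v p (ℓ + 1)) + 0 := by gcongr
    _ = _ := add_zero _

lemma exists_short_walk (hB : CyclesNonpos B) (m : ℕ) (hm : 0 < m) (v : ℕ → Fin n) :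
    ∃ m' w, 0 < m' ∧ m' ≤ n ∧ w 0 = v 0 ∧ w m' = v m ∧
      walkWeight B m v ≤ walkWeight B m' w := by
  induction m using Nat.strong_induction_on generalizing v with
  | _ m ih =>
    by_cases hmn : m ≤ n
    · exact ⟨m, v, hm, hmn, rfl, rfl, le_rfl⟩
    obtain ⟨m₁, w₁, hm₁, hlt, hw₁0, hw₁m, hle₁⟩ := exists_shorter_walk hB (not_le.mp hmn) v
    obtain ⟨m', w, hm', hm'n, hw0, hwm, hle⟩ := ih m₁ hlt hm₁ w₁
    exact ⟨m', w, hm', hm'n, hw0.trans hw₁0, hwm.trans hw₁m, hle₁.trans hle⟩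

/-- Column `j` of the Kleene plus `B ⊕ B² ⊕ ⋯ ⊕ Bⁿ`. -/
noncomputable def kleeneCol (B : Fin n → Fin n → T) (j : Fin n) : Fin n → T :=
  fun i => (range n).sup fun m => bestWalk B j (m + 1) i

lemma bestWalk_le_kleeneCol_of_pos (hB : CyclesNonpos B) {m : ℕ} (hm : 0 < m) (i j : Fin n) :
    bestWalk B j m i ≤ kleeneCol B j i := by
  by_cases hbot : bestWalk B j m i = ⊥
  · simp [hbot]
  obtain ⟨v, rfl, hvm, hv⟩ := exists_walkWeight_eq_bestWalk B j m i hbot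
  obtain ⟨m', w, hm', hm'n, hw0, hwm, hle⟩ := exists_short_walk hB m hm v
  obtain ⟨k, rfl⟩ : ∃ k, m' = k + 1 := ⟨m' - 1, by omega⟩
  calc bestWalk B j m (v 0) = walkWeight B m v := hv.symm
    _ ≤ walkWeight B (k + 1) w := hle
    _ ≤ bestWalk B j (k + 1) (w 0) := walkWeight_le_bestWalk B j _ w (hwm.trans hvm)
    _ ≤ kleeneCol B j (v 0) := by
      rw [hw0]
      exact le_sup (f := fun m => bestWalk B j (m + 1) (v 0)) (mem_range.mpr (by omega))

open Fin.NatCast in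
lemma zero_le_kleeneCol (hB : CyclesNonpos B) {ℓ : ℕ} (c : Fin (ℓ + 1) → Fin n)
    (hc : cwt B c = 0) : 0 ≤ kleeneCol B (c 0) (c 0) := by
  set v : ℕ → Fin n := fun k => c k with hv_def
  have hcv : (fun k : Fin (ℓ + 1) => v k) = c := funext fun k => congrArg c (Fin.cast_val_eq_self k)
  have hv : v (ℓ + 1) = v 0 := by simp [hv_def]
  have hv0 : v 0 = c 0 := by simp [hv_def]
  calc (0 : T) = walkWeight B (ℓ + 1) v := by rw [walkWeight_eq_cwt B ℓ v hv, hcv, hc]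
    _ ≤ bestWalk B (c 0) (ℓ + 1) (v 0) := walkWeight_le_bestWalk B _ _ v (hv.trans hv0)
    _ ≤ kleeneCol B (c 0) (c 0) := hv0 ▸ bestWalk_le_kleeneCol_of_pos hB ℓ.succ_pos _ _

lemma bestWalk_le_kleeneCol (hB : CyclesNonpos B) {j : Fin n} (h0 : 0 ≤ kleeneCol B j j)
    (m : ℕ) (i : Fin n) : bestWalk B j m i ≤ kleeneCol B j i := by
  rcases m with _ | m
  · by_cases hij : i = j
    · simpa [bestWalk, hij] using h0
    · simp [bestWalk, hij]
  · exact bestWalk_le_kleeneCol_of_pos hB m.succ_pos i j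

lemma tmulVec_kleeneCol (hB : CyclesNonpos B) {j : Fin n} (h0 : 0 ≤ kleeneCol B j j) :
    tmulVec B (kleeneCol B j) = kleeneCol B j := by
  funext i
  apply le_antisymm
  · refine Finset.sup_le fun k _ => ?_
    rw [kleeneCol, add_finset_sup]
    refine Finset.sup_le fun m _ => ?_
    calc B i k + bestWalk B j (m + 1) k ≤ bestWalk B j (m + 2) i :=
          le_sup (f := fun k => B i k + bestWalk B j (m + 1) k) (mem_univ k)
      _ ≤ kleeneCol B j i := bestWalk_le_kleeneCol_of_pos hB (by omega) i j
  · refine Finset.sup_le fun m _ => Finset.sup_le fun k _ => ?_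
    calc B i k + bestWalk B j m k ≤ B i k + kleeneCol B j k := by
          gcongr
          exact bestWalk_le_kleeneCol hB h0 m k
      _ ≤ tmulVec B (kleeneCol B j) i :=
          le_sup (f := fun k => B i k + kleeneCol B j k) (mem_univ k)

lemma exists_fixed_vector (hB : CyclesNonpos B) {ℓ : ℕ} (c : Fin (ℓ + 1) → Fin n)
    (hc : cwt B c = 0) : ∃ u : Fin n → T, u ≠ (fun _ => ⊥) ∧ tmulVec B u = u := by
  have h0 := zero_le_kleeneCol hB c hc
  refine ⟨kleeneCol B (c 0), fun hbot => ?_, tmulVec_kleeneCol hB h0⟩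
  rw [hbot] at h0
  simp at h0

end NonposCycles

lemma cwt_add_const {n ℓ : ℕ} (A : Fin n → Fin n → T) (x : ℝ) (c : Fin (ℓ + 1) → Fin n) :
    cwt (fun i j => A i j + (x : T)) c = cwt A c + (((ℓ : ℝ) + 1) * x : ℝ) := by
  rw [cwt, cwt, sum_add_distrib, sum_const, card_univ, Fintype.card_fin, ← WithBot.coe_nsmul,
    nsmul_eq_mul]
  push_cast
  rfl

lemma tmulVec_add_const {n : ℕ} (A : Fin n → Fin n → T) (x : ℝ) (u : Fin n → T) :
    tmulVec (fun i j => A i j + (x : T)) u = fun i => (x : T) + tmulVec A u i := by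
  funext i
  rw [tmulVec, tmulVec, add_finset_sup]
  congr 1
  funext j
  ac_rfl

theorem exists_eigenvector_of_rhoEq {n : ℕ} {A : Fin n → Fin n → T} {r : ℝ} (h : RhoEq A r) :
    ∃ u : Fin n → T, u ≠ (fun _ => ⊥) ∧ tmulVec A u = fun i => (r : T) + u i := by
  obtain ⟨⟨ℓ, c, hc⟩, hle⟩ := h
  set B : Fin n → Fin n → T := fun i j => A i j + ((-r : ℝ) : T)
  have hB : CyclesNonpos B := fun ℓ c => by
    calc cwt B c = cwt A c + (((ℓ : ℝ) + 1) * -r : ℝ) := cwt_add_const A (-r) c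
      _ ≤ (((ℓ : ℝ) + 1) * r : ℝ) + (((ℓ : ℝ) + 1) * -r : ℝ) := by gcongr; exact hle ℓ c
      _ = 0 := by rw [← WithBot.coe_add]; norm_num
  have hcB : cwt B c = 0 := by
    rw [cwt_add_const, hc, ← WithBot.coe_add]
    norm_num
  obtain ⟨u, hu, hBu⟩ := exists_fixed_vector hB c hcB
  have hA : A = fun i j => B i j + (r : T) := by
    funext i j
    rw [add_assoc, ← WithBot.coe_add, neg_add_cancel, WithBot.coe_zero, add_zero]
  exact ⟨u, hu, by rw [hA, tmulVec_add_const, hBu]⟩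

lemma exists_arc_of_eigen {n : ℕ} {A : Fin n → Fin n → T} {u : Fin n → T} {lam : T}
    (heig : tmulVec A u = fun i => lam + u i) (hlam : lam ≠ ⊥) {i : Fin n} (hi : u i ≠ ⊥) :
    ∃ j, u j ≠ ⊥ ∧ lam + u i ≤ A i j + u j := by
  obtain ⟨j, -, hj⟩ := exists_mem_eq_sup univ ⟨i, mem_univ i⟩ fun j => A i j + u j
  have hj' : lam + u i = A i j + u j := (congrFun heig i).symm.trans hj
  refine ⟨j, fun hbot => ?_, hj'.le⟩
  rw [hbot, WithBot.add_bot] at hj'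
  exact WithBot.add_ne_bot.mpr ⟨hlam, hi⟩ hj'

lemma le_of_succ_nsmul_le {lam : T} {r : ℝ} (ℓ : ℕ)
    (h : (ℓ + 1) • lam ≤ (((ℓ : ℝ) + 1) * r : ℝ)) : lam ≤ r := by
  induction lam using WithBot.recBotCoe with
  | bot => exact bot_le
  | coe l =>
    rw [← WithBot.coe_nsmul, WithBot.coe_le_coe, nsmul_eq_mul] at h
    push_cast at h
    exact WithBot.coe_le_coe.mpr (le_of_mul_le_mul_left h (by positivity))

theorem eigenvalue_le_of_rhoEq {n : ℕ} {A : Fin n → Fin n → T} {r : ℝ} (h : RhoEq A r) {lam : T}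
    {u : Fin n → T} (hu : u ≠ fun _ => ⊥) (heig : tmulVec A u = fun i => lam + u i) :
    lam ≤ r := by
  rcases eq_or_ne lam ⊥ with rfl | hlam
  · exact bot_le
  obtain ⟨i₀, hi₀⟩ := Function.ne_iff.mp hu
  choose! next hnext using fun i (hi : u i ≠ ⊥) => exists_arc_of_eigen heig hlam hi
  set v : ℕ → Fin n := fun k => next^[k] i₀ with hv_def
  have hv : ∀ k, u (v k) ≠ ⊥ := fun k => by
    induction k with
    | zero => exact hi₀
    | succ k ih =>
      simp only [hv_def, Function.iterate_succ_apply']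
      exact (hnext _ ih).1
  have hstep : ∀ k, lam + u (v k) ≤ A (v k) (v (k + 1)) + u (v (k + 1)) := fun k => by
    simp only [hv_def, Function.iterate_succ_apply']
    exact (hnext _ (hv k)).2
  obtain ⟨p, q, hpq, -, hvpq⟩ := exists_lt_le_card_eq v
  obtain ⟨ℓ, rfl⟩ : ∃ ℓ, q = p + (ℓ + 1) := ⟨q - p - 1, by omega⟩
  have hclosed : v (p + (ℓ + 1)) = v (p + 0) := hvpq.symm
  have key := nsmul_add_le_walkWeight_add A (u := u) (v := fun k => v (p + k))
    (fun k => hstep (p + k)) (ℓ + 1)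
  rw [walkWeight_eq_cwt A ℓ _ hclosed, hclosed] at key
  refine le_of_succ_nsmul_le ℓ ((WithBot.add_le_add_iff_right (hv (p + 0))).mp (key.trans ?_))
  gcongr
  exact h.2 ℓ _

end MaxPlus

/-- `ρ(A)` is the maximal tropical eigenvalue of `A`:
if `ρ(A) = r ∈ ℝ` (i.e. `ρ(A) ≠ -∞`), there is an eigenvector for `r`,
and every tropical eigenvalue `λ` satisfies `λ ≤ ρ(A)`. -/
theorem stmt1 {n : ℕ} (A : Fin n → Fin n → T) (r : ℝ) (h : RhoEq A r) :
    (∃ u : Fin n → T, u ≠ (fun _ => (⊥ : T)) ∧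
      tmulVec A u = fun i => (r : T) + u i) ∧
    (∀ lam : T, ∀ u : Fin n → T, u ≠ (fun _ => (⊥ : T)) →
      (tmulVec A u = fun i => lam + u i) → lam ≤ (r : T)) :=
  ⟨MaxPlus.exists_eigenvector_of_rhoEq h,
    fun _ _ hu heig => MaxPlus.eigenvalue_le_of_rhoEq h hu heig⟩
end

section
/- Let A ∈ T^{n×n} with ρ(A) = 0 be such that its critical graph G_c(A) is the disjoint union of simple circuits covering all nodes {1,…,n}. Then per(A) = 0, A has a unique maximizing permutation τ_A, and the graph of τ_A (arcs (i, τ_A(i))) coincides with G_c(A). -/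
/-!
For `m = orderOf σ`, summing over `i` the weights of the closed walks `i → σ i → ⋯ → σ^m i`
counts every arc `(i, σ i)` exactly `m` times, so it gives `m • wt A σ`. Each walk is a circuit,
of weight `≤ 0` since `ρ(A) = 0`; hence `wt A σ ≤ 0`. A critical circuit through `i` follows `τ`,
so the `τ`-walks have weight `0` and `wt A τ = 0 = per A`. Conversely, if `wt A σ = 0` then every
`σ`-walk has weight `0`, so each arc `(i, σ i)` is critical, which forces `σ = τ`.
-/

theorem eq_zero_of_nsmul_eq_zero {M : Type*} [AddMonoid M] [LinearOrder M] [AddLeftMono M]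
    {x : M} {d : ℕ} (hd : d ≠ 0) (h : d • x = 0) : x = 0 :=
  le_antisymm ((nsmul_nonpos_iff hd).1 h.le) ((nsmul_nonneg_iff hd).1 h.ge)

section Orbit

open Finset

variable {α M : Type*} [AddCommMonoid M]

theorem pow_orderOf_apply (σ : Equiv.Perm α) (i : α) : (σ ^ orderOf σ) i = i := by
  rw [pow_orderOf_eq_one, Equiv.Perm.one_apply]

def orbitWt (A : α → α → M) (σ : Equiv.Perm α) (i : α) (m : ℕ) : M :=
  ∑ k ∈ range m, A ((σ ^ k) i) ((σ ^ (k + 1)) i)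

theorem orbitWt_add (A : α → α → M) (σ : Equiv.Perm α) (i : α) (a b : ℕ) :
    orbitWt A σ i (a + b) = orbitWt A σ i a + orbitWt A σ ((σ ^ a) i) b := by
  simp only [orbitWt, sum_range_add, ← Equiv.Perm.mul_apply, ← pow_add, add_comm, add_assoc]

theorem orbitWt_mul (A : α → α → M) {σ : Equiv.Perm α} {i : α} {d : ℕ} (hd : (σ ^ d) i = i)
    (t : ℕ) : orbitWt A σ i (d * t) = t • orbitWt A σ i d := by
  induction t with
  | zero => simp [orbitWt]
  | succ t ih => rw [Nat.mul_succ, add_comm, orbitWt_add, hd, ih, succ_nsmul']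

theorem sum_orbitWt [Fintype α] (A : α → α → M) (σ : Equiv.Perm α) (m : ℕ) :
    ∑ i, orbitWt A σ i m = m • ∑ i, A i (σ i) := by
  simp only [orbitWt]
  rw [sum_comm]
  have h : ∀ k, ∑ i, A ((σ ^ k) i) ((σ ^ (k + 1)) i) = ∑ i, A i (σ i) := fun k => by
    simpa only [pow_succ', Equiv.Perm.mul_apply] using Equiv.sum_comp (σ ^ k) fun j => A j (σ j)
  simp only [h, sum_const, card_range]

theorem orbitWt_eq_zero_of_period [LinearOrder M] [AddLeftMono M] (A : α → α → M)
    {σ : Equiv.Perm α} {i : α} {d m : ℕ} (hd : d ≠ 0) (hdi : (σ ^ d) i = i)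
    (hmi : (σ ^ m) i = i) (h : orbitWt A σ i d = 0) : orbitWt A σ i m = 0 := by
  refine eq_zero_of_nsmul_eq_zero hd ?_
  rw [← orbitWt_mul A hmi, mul_comm, orbitWt_mul A hdi, h, smul_zero]

end Orbit

section Circuit

variable {α : Type*} {ℓ : ℕ} {σ : Equiv.Perm α}

theorem pow_apply_of_succ_eq {c : Fin (ℓ + 1) → α} (hc : ∀ k, c (k + 1) = σ (c k))
    (k : Fin (ℓ + 1)) : c k = (σ ^ (k : ℕ)) (c 0) := by
  induction k using Fin.induction with
  | zero => simp
  | succ k ih =>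
    rw [← Fin.coeSucc_eq_succ, hc, ih, Fin.coeSucc_eq_succ, Fin.val_succ, Fin.val_castSucc,
      pow_succ', Equiv.Perm.mul_apply]

theorem pow_succ_apply_of_succ_eq {c : Fin (ℓ + 1) → α} (hc : ∀ k, c (k + 1) = σ (c k)) :
    (σ ^ (ℓ + 1)) (c 0) = c 0 := by
  have hlast := pow_apply_of_succ_eq hc (Fin.last ℓ)
  rw [Fin.val_last] at hlast
  rw [pow_succ', Equiv.Perm.mul_apply, ← hlast, ← hc, Fin.last_add_one]

theorem pow_val_add_one_apply {i : α} (hi : (σ ^ (ℓ + 1)) i = i) (k : Fin (ℓ + 1)) :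
    (σ ^ ((k + 1 : Fin (ℓ + 1)) : ℕ)) i = σ ((σ ^ (k : ℕ)) i) := by
  rw [Fin.val_add_one, ← Equiv.Perm.mul_apply, ← pow_succ']
  split_ifs with hk
  · rw [hk, Fin.val_last, hi, pow_zero, Equiv.Perm.one_apply]
  · rfl

end Circuit

section CircuitWeight

variable {n ℓ : ℕ} (A : Fin n → Fin n → T)

theorem cwt_eq_orbitWt {σ : Equiv.Perm (Fin n)} {c : Fin (ℓ + 1) → Fin n}
    (hc : ∀ k, c (k + 1) = σ (c k)) :
    cwt A c = orbitWt A σ (c 0) (ℓ + 1) := by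
  rw [orbitWt, ← Fin.sum_univ_eq_sum_range (fun k => A ((σ ^ k) (c 0)) ((σ ^ (k + 1)) (c 0)))]
  refine Finset.sum_congr rfl fun k _ => ?_
  rw [hc, pow_apply_of_succ_eq hc k, pow_succ', Equiv.Perm.mul_apply]

theorem cwt_pow_apply {σ : Equiv.Perm (Fin n)} {i : Fin n} (hi : (σ ^ (ℓ + 1)) i = i) :
    cwt A (fun k : Fin (ℓ + 1) => (σ ^ (k : ℕ)) i) = orbitWt A σ i (ℓ + 1) := by
  have h := cwt_eq_orbitWt A (c := fun k : Fin (ℓ + 1) => (σ ^ (k : ℕ)) i)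
    (pow_val_add_one_apply hi)
  rwa [Fin.val_zero, pow_zero, Equiv.Perm.one_apply] at h

theorem cwt_rotate (c : Fin (ℓ + 1) → Fin n)
    (k₀ : Fin (ℓ + 1)) : cwt A (fun k => c (k₀ + k)) = cwt A c := by
  simp only [cwt, ← add_assoc]
  exact Equiv.sum_comp (Equiv.addLeft k₀) fun k => A (c k) (c (k + 1))

end CircuitWeight

section Critical

open Finset

variable {n : ℕ} {A : Fin n → Fin n → T}

theorem orbitWt_nonpos (h0 : RhoEq A 0) (σ : Equiv.Perm (Fin n)) {i : Fin n} {m : ℕ}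
    (hm : m ≠ 0) (hi : (σ ^ m) i = i) : orbitWt A σ i m ≤ 0 := by
  obtain ⟨ℓ, rfl⟩ := Nat.exists_eq_succ_of_ne_zero hm
  simpa [cwt_pow_apply A hi] using h0.2 ℓ fun k => (σ ^ (k : ℕ)) i

theorem wt_nonpos (h0 : RhoEq A 0) (σ : Equiv.Perm (Fin n)) : wt A σ ≤ 0 := by
  have hm := (orderOf_pos σ).ne'
  refine (nsmul_nonpos_iff hm).1 ?_
  rw [wt, ← sum_orbitWt]
  exact sum_nonpos fun i _ => orbitWt_nonpos h0 σ hm (pow_orderOf_apply σ i)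

theorem exists_orbitWt_eq_zero {τ : Equiv.Perm (Fin n)}
    (hτ : ∀ i j, CritArc A 0 i j ↔ j = τ i) (i : Fin n) :
    ∃ d ≠ 0, (τ ^ d) i = i ∧ orbitWt A τ i d = 0 := by
  obtain ⟨ℓ, c, hc, k₀, hk₀, -⟩ := (hτ i (τ i)).2 rfl
  have hstep : ∀ k, c (k₀ + (k + 1)) = τ (c (k₀ + k)) := fun k =>
    (hτ _ _).1 ⟨ℓ, c, hc, k₀ + k, rfl, by rw [add_assoc]⟩
  have hstart : c (k₀ + 0) = i := by rw [add_zero, hk₀]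
  refine ⟨ℓ + 1, ℓ.succ_ne_zero, ?_, ?_⟩
  · exact hstart ▸ pow_succ_apply_of_succ_eq (c := fun k => c (k₀ + k)) hstep
  · rw [← hstart, ← cwt_eq_orbitWt A (c := fun k => c (k₀ + k)) hstep, cwt_rotate, hc]
    simp

theorem wt_eq_zero_of_critArc_iff {τ : Equiv.Perm (Fin n)}
    (hτ : ∀ i j, CritArc A 0 i j ↔ j = τ i) : wt A τ = 0 := by
  refine eq_zero_of_nsmul_eq_zero (orderOf_pos τ).ne' ?_
  rw [wt, ← sum_orbitWt]
  refine sum_eq_zero fun i _ => ?_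
  obtain ⟨d, hd, hdi, hzero⟩ := exists_orbitWt_eq_zero hτ i
  exact orbitWt_eq_zero_of_period A hd hdi (pow_orderOf_apply τ i) hzero

theorem critArc_of_wt_eq_zero (h0 : RhoEq A 0) {σ : Equiv.Perm (Fin n)} (hσ : wt A σ = 0)
    (i : Fin n) : CritArc A 0 i (σ i) := by
  obtain ⟨ℓ, hℓ⟩ := Nat.exists_eq_succ_of_ne_zero (orderOf_pos σ).ne'
  have hfix : ∀ j, (σ ^ (ℓ + 1)) j = j := fun j => by
    rw [← Nat.succ_eq_add_one, ← hℓ, pow_orderOf_apply]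
  have hzero : ∀ j, orbitWt A σ j (ℓ + 1) = 0 := by
    have hsum : ∑ j, orbitWt A σ j (ℓ + 1) = 0 := by
      rw [sum_orbitWt]
      exact (congrArg _ hσ).trans (smul_zero _)
    simpa using (sum_eq_zero_iff_of_nonpos fun j _ =>
      orbitWt_nonpos h0 σ ℓ.succ_ne_zero (hfix j)).1 hsum
  refine ⟨ℓ, fun k => (σ ^ (k : ℕ)) i, ?_, 0, by simp, ?_⟩
  · rw [cwt_pow_apply A (hfix i), hzero]
    simp
  · show (σ ^ ((0 + 1 : Fin (ℓ + 1)) : ℕ)) i = σ i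
    rw [pow_val_add_one_apply (hfix i), Fin.val_zero, pow_zero, Equiv.Perm.one_apply]

end Critical

/-- If `ρ(A) = 0` and the critical graph is a disjoint union of simple
circuits covering all nodes (i.e. it is the graph of a permutation), then `per(A) = 0`,
the maximizing permutation is unique, and its graph is the critical graph. -/
theorem stmt4 {n : ℕ} (A : Fin n → Fin n → T) (h0 : RhoEq A 0)
    (τ : Equiv.Perm (Fin n)) (hτ : ∀ i j, CritArc A 0 i j ↔ j = τ i) :
    per A = (0 : T) ∧ (∃! σ : Equiv.Perm (Fin n), wt A σ = per A) ∧
    (∀ σ : Equiv.Perm (Fin n), wt A σ = per A →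
      ∀ i j, CritArc A 0 i j ↔ σ i = j) := by
  have hτ0 := wt_eq_zero_of_critArc_iff hτ
  have hper : per A = 0 := le_antisymm (Finset.sup_le fun σ _ => wt_nonpos h0 σ)
    (hτ0 ▸ Finset.le_sup (Finset.mem_univ τ))
  have huniq : ∀ σ, wt A σ = per A → σ = τ := fun σ hσ =>
    Equiv.ext fun i => (hτ i (σ i)).1 (critArc_of_wt_eq_zero h0 (hσ.trans hper) i)
  refine ⟨hper, ⟨τ, hτ0.trans hper.symm, huniq⟩, fun σ hσ i j => ?_⟩
  rw [hτ, huniq σ hσ, eq_comm]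
end

section
/- Let A ∈ T^{n×n} with ρ(A) ≠ -∞. A vector u ∈ ℝ^n is a visualization of A (i.e., A_{ij} + u_j − u_i = ρ(A) for every arc (i,j) of the critical graph G_c(A), and A_{ij} + u_j − u_i ≤ ρ(A) for all i,j) if and only if A⊙u ≤ ρ(A)⊙u entrywise. -/
/-- `u ∈ ℝ^n` is a visualization of `A` iff `A ⊙ u ≤ ρ(A) ⊙ u`. -/
theorem stmt7 {n : ℕ} (A : Fin n → Fin n → T) (r : ℝ) (h : RhoEq A r)
    (u : Fin n → ℝ) :
    ((∀ i j, CritArc A r i j → A i j + ((u j : ℝ) : T) = ((r + u i : ℝ) : T)) ∧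
      (∀ i j, A i j + ((u j : ℝ) : T) ≤ ((r + u i : ℝ) : T))) ↔
    (∀ i, tmulVec A (fun j => ((u j : ℝ) : T)) i ≤ ((r + u i : ℝ) : T)) := by
  constructor
  · rintro ⟨-, hle⟩ i
    simp only [tmulVec]
    exact Finset.sup_le fun j _ => hle i j
  · intro H
    have hle : ∀ i j, A i j + ((u j : ℝ) : T) ≤ ((r + u i : ℝ) : T) := by
      intro i j
      have h0 := H i
      simp only [tmulVec] at h0
      exact le_trans (Finset.le_sup (f := fun j => A i j + ((u j : ℝ) : T)) (Finset.mem_univ j)) h0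
    refine ⟨?_, hle⟩
    rintro i j ⟨ℓ, c, hc, k, hki, hkj⟩
    have hne : ∀ m : Fin (ℓ + 1), A (c m) (c (m + 1)) ≠ ⊥ := by
      intro m hm
      have hbot : cwt A c = ⊥ := WithBot.sum_eq_bot_iff.2 ⟨m, Finset.mem_univ m, hm⟩
      rw [hc] at hbot
      exact WithBot.coe_ne_bot hbot
    choose a ha using fun m => WithBot.ne_bot_iff_exists.1 (hne m)
    have hab : ∀ m : Fin (ℓ + 1), a m ≤ r + u (c m) - u (c (m + 1)) := by
      intro m
      have h2 := hle (c m) (c (m + 1))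
      rw [← ha m, ← WithBot.coe_add, WithBot.coe_le_coe] at h2
      linarith
    have hsum : ∑ m : Fin (ℓ + 1), a m = ((ℓ : ℝ) + 1) * r := by
      have h3 : ((∑ m : Fin (ℓ + 1), a m : ℝ) : T) = ((((ℓ : ℝ) + 1) * r : ℝ) : T) := by
        rw [WithBot.coe_sum, ← hc]
        exact Finset.sum_congr rfl fun m _ => ha m
      exact_mod_cast h3
    have htel : ∑ m : Fin (ℓ + 1), u (c (m + 1)) = ∑ m : Fin (ℓ + 1), u (c m) :=
      Fintype.sum_equiv (Equiv.addRight (1 : Fin (ℓ + 1))) _ _ (fun _ => rfl)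
    have hbsum : ∑ m : Fin (ℓ + 1), (r + u (c m) - u (c (m + 1))) = ((ℓ : ℝ) + 1) * r := by
      have : ∑ m : Fin (ℓ + 1), (r + u (c m) - u (c (m + 1)))
          = ∑ _m : Fin (ℓ + 1), r + (∑ m : Fin (ℓ + 1), u (c m)
            - ∑ m : Fin (ℓ + 1), u (c (m + 1))) := by
        rw [Finset.sum_sub_distrib, Finset.sum_add_distrib]
        ring
      rw [this, htel, Finset.sum_const, Finset.card_univ, Fintype.card_fin]
      push_cast
      ring
    have heach := (Finset.sum_eq_sum_iff_of_le (fun m (_ : m ∈ Finset.univ) => hab m)).1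
      (hsum.trans hbsum.symm) k (Finset.mem_univ k)
    have hak := ha k
    rw [hki, hkj] at heach hak
    rw [← hak, ← WithBot.coe_add, WithBot.coe_eq_coe]
    linarith [heach]
end

section
/- Let A ∈ T^{n×n} with ρ(A) ≠ -∞ such that every node of {1,…,n} belongs to the critical graph G_c(A). Then every vector u ∈ ℝ^n with A⊙u ≤ ρ(A)⊙u satisfies A⊙u = ρ(A)⊙u; i.e., the finite visualizations of A are exactly the finite tropical eigenvectors of A associated to ρ(A). -/
/-- If every node is critical, then every finite visualization of `A`
(`A ⊙ u ≤ ρ(A) ⊙ u`) is an eigenvector: `A ⊙ u = ρ(A) ⊙ u`. -/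
theorem stmt8 {n : ℕ} (A : Fin n → Fin n → T) (r : ℝ) (h : RhoEq A r)
    (hcrit : ∀ i : Fin n, CritNode A r i) :
    ∀ u : Fin n → ℝ,
      (∀ i, tmulVec A (fun j => ((u j : ℝ) : T)) i ≤ ((r + u i : ℝ) : T)) →
      (∀ i, tmulVec A (fun j => ((u j : ℝ) : T)) i = ((r + u i : ℝ) : T)) := by
  intro u hle i
  obtain ⟨ℓ, c, hc, k, hk⟩ := hcrit i
  -- each entry on the circuit is finite
  have hfin : ∀ m : Fin (ℓ + 1), A (c m) (c (m + 1)) ≠ ⊥ := by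
    intro m hm
    have : cwt A c = ⊥ := by
      unfold cwt
      exact WithBot.sum_eq_bot_iff.mpr ⟨m, Finset.mem_univ m, hm⟩
    rw [hc] at this
    exact WithBot.coe_ne_bot this
  choose a ha using fun m => WithBot.ne_bot_iff_exists.mp (hfin m)
  -- sum of a equals (ℓ+1) * r
  have hsum : ∑ m : Fin (ℓ + 1), a m = ((ℓ : ℝ) + 1) * r := by
    have : ((∑ m : Fin (ℓ + 1), a m : ℝ) : T) = ((((ℓ : ℝ) + 1) * r : ℝ) : T) := by
      rw [← hc]
      unfold cwt
      push_cast
      exact Finset.sum_congr rfl fun m _ => (ha m)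
    exact_mod_cast this
  -- arc inequalities
  have harc : ∀ m : Fin (ℓ + 1), a m + u (c (m + 1)) ≤ r + u (c m) := by
    intro m
    have h1 : A (c m) (c (m + 1)) + ((u (c (m + 1)) : ℝ) : T)
        ≤ tmulVec A (fun j => ((u j : ℝ) : T)) (c m) := by
      unfold tmulVec
      exact Finset.le_sup (f := fun j => A (c m) j + ((u j : ℝ) : T))
        (Finset.mem_univ (c (m + 1)))
    have h2 := le_trans h1 (hle (c m))
    rw [← ha m] at h2
    have h3 : ((a m + u (c (m + 1)) : ℝ) : T) ≤ ((r + u (c m) : ℝ) : T) := by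
      push_cast
      exact h2
    exact_mod_cast h3
  -- telescoping: sum of u ∘ c ∘ succ = sum of u ∘ c
  have htel : ∑ m : Fin (ℓ + 1), u (c (m + 1)) = ∑ m : Fin (ℓ + 1), u (c m) :=
    Fintype.sum_equiv (Equiv.addRight (1 : Fin (ℓ + 1))) _ _ (fun m => rfl)
  -- equality on each arc
  have heq : ∀ m : Fin (ℓ + 1), a m + u (c (m + 1)) = r + u (c m) := by
    have hz : ∑ m : Fin (ℓ + 1), ((r + u (c m)) - (a m + u (c (m + 1)))) = 0 := by
      rw [Finset.sum_sub_distrib]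
      have : ∑ m : Fin (ℓ + 1), (r + u (c m))
          = ((ℓ : ℝ) + 1) * r + ∑ m : Fin (ℓ + 1), u (c m) := by
        rw [Finset.sum_add_distrib, Finset.sum_const]
        simp [add_mul, mul_comm]
      rw [this, Finset.sum_add_distrib, hsum, htel]
      ring
    have hall := (Finset.sum_eq_zero_iff_of_nonneg
      (fun m _ => sub_nonneg.mpr (harc m))).mp hz
    intro m
    have := hall m (Finset.mem_univ m)
    linarith [sub_eq_zero.mp this]
  -- conclude
  refine le_antisymm (hle i) ?_
  have h1 : A i (c (k + 1)) + ((u (c (k + 1)) : ℝ) : T)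
      ≤ tmulVec A (fun j => ((u j : ℝ) : T)) i := by
    rw [← hk]
    unfold tmulVec
    exact Finset.le_sup (f := fun j => A (c k) j + ((u j : ℝ) : T))
      (Finset.mem_univ (c (k + 1)))
  have h2 : ((r + u i : ℝ) : T) = A i (c (k + 1)) + ((u (c (k + 1)) : ℝ) : T) := by
    rw [← hk, ← ha k, ← WithBot.coe_add, heq k]
  rw [h2]
  exact h1
end

section
/- Let A ∈ T^{n×n} be tropically non-singular with unique maximizing permutation τ_A. Then the fundamental cell F(A) = { x ∈ ℝ^n : ∀i, ∀j ≠ τ_A(i), A_{ij} + x_j < A_{iτ_A(i)} + x_{τ_A(i)} } is a non-empty open subset of ℝ^n, and the map φ_A : x ↦ A⊙x restricted to F(A) is given by (φ_A(x))_i = A_{iτ_A(i)} + x_{τ_A(i)}; in particular φ_A is an isometry of F(A) into ℝ^n for the Euclidean distance. -/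
/-!
Write `u = τ i` and compare row `τ⁻¹ u` of `A` with its entry in column `u`:
`C u j = A_{τ⁻¹u, j} - A_{τ⁻¹u, u}`. Then `x ∈ F(A)` means `C u j + x_j < x_u` for all `j ≠ u`,
and for a permutation `σ ≠ 1` the weight `∑ C u (σ u)` equals `wt(στ) - wt(τ) < 0` by uniqueness
of `τ`. A matrix all of whose cycles have negative weight has a strict potential: raise all weights
by a small `δ > 0` (cycles stay non-positive) and let `x_u` be the maximal weight of a simple path
starting at `u` (Bellman–Ford). On `F(A)` the maximum defining `(A ⊙ x)_i` is attained only at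
`τ i`, so `A ⊙ x` is `x ∘ τ` shifted by a constant vector, an isometry.
-/

open Equiv Finset Filter Topology

lemma add_coe_lt_coe_iff (b : T) (c d : ℝ) : b + c < d ↔ b < (d - c : ℝ) := by
  induction b using WithBot.recBotCoe with
  | bot => simp
  | coe r =>
    norm_cast
    constructor <;> intro h <;> linarith

lemma isOpen_setOf_add_lt_add {X : Type*} [TopologicalSpace X] (b c : T) {f g : X → ℝ}
    (hf : Continuous f) (hg : Continuous g) : IsOpen {x | b + f x < c + g x} := by
  induction c using WithBot.recBotCoe with
  | bot => simp
  | coe r =>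
    induction b using WithBot.recBotCoe with
    | bot => simp
    | coe p =>
      norm_cast
      exact isOpen_lt (continuous_const.add hf) (continuous_const.add hg)

lemma eventually_sum_add_nonpos {ι : Type*} {s : Finset ι} {f : ι → T}
    (hf : ∑ u ∈ s, f u < 0) :
    ∀ᶠ δ : ℝ in 𝓝 0, ∑ u ∈ s, (f u + δ) ≤ 0 := by
  simp only [sum_add_distrib, sum_const]
  generalize ∑ u ∈ s, f u = t at hf ⊢
  induction t using WithBot.recBotCoe with
  | bot => exact .of_forall fun _ => by simp
  | coe r =>
    have hlim : Tendsto (fun δ : ℝ => r + #s • δ) (𝓝 0) (𝓝 r) := by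
      simpa using tendsto_const_nhds.add ((tendsto_id (x := 𝓝 (0 : ℝ))).const_smul #s)
    refine (hlim.eventually_lt_const (WithBot.coe_lt_coe.mp hf)).mono fun δ hδ => ?_
    norm_cast
    exact hδ.le

section PathWeight

variable {ι : Type*}

def pathWeight (C : ι → ι → T) (l : List ι) : T :=
  (List.zipWith C l l.tail).sum

@[simp]
lemma pathWeight_singleton (C : ι → ι → T) (a : ι) : pathWeight C [a] = 0 := rfl

@[simp]
lemma pathWeight_cons_cons (C : ι → ι → T) (a b : ι) (l : List ι) :
    pathWeight C (a :: b :: l) = C a b + pathWeight C (b :: l) := by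
  simp [pathWeight]

lemma pathWeight_append_cons (C : ι → ι → T) (l : List ι) (u : ι) (r : List ι) :
    pathWeight C (l ++ u :: r) = pathWeight C (l ++ [u]) + pathWeight C (u :: r) := by
  induction l with
  | nil => simp
  | cons a l ih =>
    cases l with
    | nil => simp
    | cons b l =>
      simp only [List.cons_append, pathWeight_cons_cons] at ih ⊢
      rw [ih, add_assoc]

lemma pathWeight_cycle_eq_sum_support [Fintype ι] [DecidableEq ι] (C : ι → ι → T)
    {a : ι} {l : List ι} (hl : (a :: l).Nodup) (hne : l ≠ []) :
    pathWeight C (a :: l ++ [a]) =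
      ∑ u ∈ (a :: l).formPerm.support, C u ((a :: l).formPerm u) := by
  rw [List.support_formPerm_of_nodup _ hl fun _ h => hne (List.cons.inj h).2,
    List.sum_toFinset _ hl, pathWeight, List.cons_append, List.tail_cons]
  congr 1
  apply List.ext_getElem (by simp)
  intro i h₁ h₂
  simp only [List.getElem_zipWith, List.getElem_map]
  rw [List.formPerm_apply_getElem _ hl]
  have hrot : l ++ [a] = (a :: l).rotate 1 := by simp
  have hi : i < (a :: l).length := by simpa using h₂
  congr 1
  · simp only [← List.cons_append, List.getElem_append_left hi]
  · simp only [hrot, List.getElem_rotate]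

end PathWeight

section Potential

variable {ι : Type*} [Fintype ι] [DecidableEq ι]

theorem exists_potential_of_cycle_nonpos (C : ι → ι → T)
    (hC : ∀ σ : Perm ι, σ.IsCycle → ∑ u ∈ σ.support, C u (σ u) ≤ 0) :
    ∃ x : ι → ℝ, ∀ u v, u ≠ v → C u v + x v ≤ x u := by
  have hfin : {t : List ι | t.Nodup}.Finite :=
    (Set.finite_range (Subtype.val : {t : List ι // t.Nodup} → List ι)).subset
      fun t ht => ⟨⟨t, ht⟩, rfl⟩
  have hmax : ∀ v, ∃ t, (v :: t).Nodup ∧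
      ∀ s, (v :: s).Nodup → pathWeight C (v :: s) ≤ pathWeight C (v :: t) := fun v => by
    obtain ⟨t, ht, hmax⟩ := Set.exists_max_image {t | (v :: t).Nodup}
      (fun t => pathWeight C (v :: t)) (hfin.subset fun t ht => ht.of_cons) ⟨[], by simp⟩
    exact ⟨t, ht, hmax⟩
  choose P hP hPmax using hmax
  choose x hx using fun v => WithBot.ne_bot_iff_exists.mp
    (ne_bot_of_le_ne_bot WithBot.coe_ne_bot (hPmax v [] (by simp)))
  refine ⟨x, fun u v huv => ?_⟩
  rw [hx u, hx v]
  by_cases hu : u ∈ P v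
  · -- the edge `u → v` closes the part of the best path from `v` before `u` into a cycle
    obtain ⟨X, Y, hXY⟩ := List.append_of_mem hu
    have hPv := hP v
    rw [hXY] at hPv
    have hcyc : pathWeight C (v :: X ++ [u]) + C u v ≤ 0 := by
      have hnd : (v :: (X ++ [u])).Nodup :=
        hPv.sublist (((List.nil_sublist Y).cons_cons u).append_left X |>.cons_cons v)
      have hsplit :
          pathWeight C (v :: (X ++ [u]) ++ [v]) = pathWeight C (v :: X ++ [u]) + C u v := by
        rw [show v :: (X ++ [u]) ++ [v] = v :: X ++ u :: [v] by simp, pathWeight_append_cons]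
        simp
      rw [← hsplit, pathWeight_cycle_eq_sum_support C hnd (by simp)]
      exact hC _ (List.isCycle_formPerm hnd (by simp))
    calc C u v + pathWeight C (v :: P v)
        = (pathWeight C (v :: X ++ [u]) + C u v) + pathWeight C (u :: Y) := by
          rw [hXY, ← List.cons_append, pathWeight_append_cons, add_left_comm, add_assoc]
      _ ≤ pathWeight C (u :: P u) := by
          refine (add_le_add_left hcyc _).trans ?_
          rw [zero_add]
          exact hPmax u Y (hPv.sublist ((List.sublist_append_right X _).cons v))
  · calc C u v + pathWeight C (v :: P v) = pathWeight C (u :: v :: P v) := by simp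
      _ ≤ pathWeight C (u :: P u) :=
          hPmax u _ (List.nodup_cons.2 ⟨by simp [huv, hu], hP v⟩)

theorem exists_potential_of_cycle_neg (C : ι → ι → T)
    (hC : ∀ σ : Perm ι, σ.IsCycle → ∑ u ∈ σ.support, C u (σ u) < 0) :
    ∃ x : ι → ℝ, ∀ u v, u ≠ v → C u v + x v < x u := by
  have hδ : ∀ᶠ δ : ℝ in 𝓝[>] 0, 0 < δ ∧
      ∀ σ : Perm ι, σ.IsCycle → ∑ u ∈ σ.support, (C u (σ u) + δ) ≤ 0 :=
    eventually_mem_nhdsWithin.and <| eventually_all.2 fun σ => nhdsWithin_le_nhds <|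
      eventually_imp_distrib_left.2 fun hσ => eventually_sum_add_nonpos (hC σ hσ)
  obtain ⟨δ, hδ, hcyc⟩ := hδ.exists
  obtain ⟨x, hx⟩ := exists_potential_of_cycle_nonpos (fun u v => C u v + δ) hcyc
  refine ⟨x, fun u v huv => ?_⟩
  have := hx u v huv
  generalize C u v = c at this ⊢
  induction c using WithBot.recBotCoe with
  | bot => simp
  | coe r =>
    norm_cast at this ⊢
    linarith

end Potential

section FundamentalCell

variable {ι : Type*}

def fundamentalCell (A : ι → ι → T) (τ : Perm ι) : Set (ι → ℝ) :=
  {x | ∀ i j, j ≠ τ i → A i j + x j < A i (τ i) + x (τ i)}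

theorem isOpen_fundamentalCell [Finite ι] (A : ι → ι → T) (τ : Perm ι) :
    IsOpen (fundamentalCell A τ) := by
  simp only [fundamentalCell, Set.ofPred_forall]
  exact isOpen_iInter_of_finite fun i => isOpen_iInter_of_finite fun j =>
    isOpen_iInter_of_finite fun _ =>
      isOpen_setOf_add_lt_add _ _ (continuous_apply j) (continuous_apply (τ i))

theorem fundamentalCell_nonempty [Fintype ι] [DecidableEq ι] (A : ι → ι → T) (τ : Perm ι)
    (a : ι → ℝ) (ha : ∀ i, A i (τ i) = a i)
    (hτ : ∀ π : Perm ι, π ≠ τ → ∑ i, A i (π i) < ∑ i, A i (τ i)) :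
    (fundamentalCell A τ).Nonempty := by
  set C : ι → ι → T := fun u j => A (τ.symm u) j + (-a (τ.symm u) : ℝ)
  have hdiag : ∀ u, C u u = 0 := fun u => by
    have := ha (τ.symm u)
    rw [apply_symm_apply] at this
    simp [C, this, ← WithBot.coe_add]
  have hcyc : ∀ σ : Perm ι, σ.IsCycle → ∑ u ∈ σ.support, C u (σ u) < 0 := by
    intro σ hσ
    have hlt := hτ (σ * τ) (by simpa using hσ.ne_one)
    rw [sum_congr rfl fun i _ => ha i, ← WithBot.coe_sum] at hlt
    rw [sum_subset (subset_univ _) fun u _ hu => by rw [Perm.notMem_support.mp hu, hdiag],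
      ← Equiv.sum_comp τ]
    simp only [C, symm_apply_apply, sum_add_distrib, ← WithBot.coe_sum, sum_neg_distrib]
    rw [← WithBot.coe_zero, add_coe_lt_coe_iff]
    simpa using hlt
  obtain ⟨x, hx⟩ := exists_potential_of_cycle_neg C hcyc
  refine ⟨x, fun i j hj => ?_⟩
  have := hx (τ i) j hj.symm
  simp only [C, symm_apply_apply, add_assoc, ← WithBot.coe_add] at this
  rw [ha, ← WithBot.coe_add]
  rw [add_coe_lt_coe_iff] at this ⊢
  convert this using 2
  ring

end FundamentalCell

theorem NonSingular.wt_lt {n : ℕ} {A : Fin n → Fin n → T} (hA : NonSingular A)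
    {τ π : Perm (Fin n)} (hτ : wt A τ = per A) (hπ : π ≠ τ) : wt A π < wt A τ :=
  hτ ▸ (Finset.le_sup (f := wt A) (mem_univ π)).lt_of_ne
    fun h => hπ (hA.2.unique h hτ)

theorem NonSingular.apply_ne_bot {n : ℕ} {A : Fin n → Fin n → T} (hA : NonSingular A)
    {τ : Perm (Fin n)} (hτ : wt A τ = per A) (i : Fin n) : A i (τ i) ≠ ⊥ := fun h =>
  hA.1 (hτ ▸ WithBot.sum_eq_bot_iff.mpr ⟨i, mem_univ i, h⟩)

theorem tmulVec_apply_of_mem_fundamentalCell {n : ℕ} {A : Fin n → Fin n → T}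
    {τ : Perm (Fin n)} {x : Fin n → ℝ} (hx : x ∈ fundamentalCell A τ) (i : Fin n) :
    tmulVec A (fun j => (x j : T)) i = A i (τ i) + x (τ i) :=
  le_antisymm
    (Finset.sup_le fun j _ =>
      (eq_or_ne j (τ i)).elim (fun h => h ▸ le_rfl) fun h => (hx i j h).le)
    (Finset.le_sup (f := fun j => A i j + x j) (mem_univ (τ i)))

/-- The fundamental cell of a non-singular matrix is a non-empty open
subset of `ℝ^n`, on which `x ↦ A ⊙ x` is given by `i ↦ A_{iτ(i)} + x_{τ(i)}`; in
particular it is a Euclidean isometry of the fundamental cell into `ℝ^n`. -/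
theorem stmt10 {n : ℕ} (A : Fin n → Fin n → T) (hA : NonSingular A)
    (τ : Equiv.Perm (Fin n)) (hτ : wt A τ = per A) :
    ∃ a : Fin n → ℝ, (∀ i, A i (τ i) = ((a i : ℝ) : T)) ∧
    (Set.Nonempty {x : Fin n → ℝ | ∀ i : Fin n, ∀ j : Fin n, j ≠ τ i →
        A i j + ((x j : ℝ) : T) < A i (τ i) + ((x (τ i) : ℝ) : T)}) ∧
    (IsOpen {x : Fin n → ℝ | ∀ i : Fin n, ∀ j : Fin n, j ≠ τ i →
        A i j + ((x j : ℝ) : T) < A i (τ i) + ((x (τ i) : ℝ) : T)}) ∧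
    (∀ x ∈ {x : Fin n → ℝ | ∀ i : Fin n, ∀ j : Fin n, j ≠ τ i →
        A i j + ((x j : ℝ) : T) < A i (τ i) + ((x (τ i) : ℝ) : T)},
      ∀ i, tmulVec A (fun j => ((x j : ℝ) : T)) i = ((a i + x (τ i) : ℝ) : T)) ∧
    (∀ x ∈ {x : Fin n → ℝ | ∀ i : Fin n, ∀ j : Fin n, j ≠ τ i →
        A i j + ((x j : ℝ) : T) < A i (τ i) + ((x (τ i) : ℝ) : T)},
      ∀ y ∈ {x : Fin n → ℝ | ∀ i : Fin n, ∀ j : Fin n, j ≠ τ i →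
        A i j + ((x j : ℝ) : T) < A i (τ i) + ((x (τ i) : ℝ) : T)},
      Real.sqrt (∑ i, ((a i + x (τ i)) - (a i + y (τ i))) ^ 2)
        = Real.sqrt (∑ i, (x i - y i) ^ 2)) := by
  choose a ha using fun i => WithBot.ne_bot_iff_exists.mp (hA.apply_ne_bot hτ i)
  have ha' : ∀ i, A i (τ i) = a i := fun i => (ha i).symm
  refine ⟨a, ha', fundamentalCell_nonempty A τ a ha' fun π hπ => hA.wt_lt hτ hπ,
    isOpen_fundamentalCell A τ, fun x hx i => ?_, fun x _ y _ => ?_⟩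
  · rw [tmulVec_apply_of_mem_fundamentalCell hx, ha', WithBot.coe_add]
  · simp_rw [add_sub_add_left_eq_sub]
    rw [Equiv.sum_comp τ fun i => (x i - y i) ^ 2]
end

section
/- Let A, B be tropical matrices of compatible sizes. Then the tropical rank of the product satisfies tr-rk(A⊙B) ≤ min(tr-rk(A), tr-rk(B)). -/
/-!
Let `C` be a non-singular `r × r` submatrix of `A ⊙ B` on rows `f` and columns `g`, with unique
optimal permutation `σ`, and pick `ℓ i` attaining the maximum in
`C i (σ i) = A (f i) (ℓ i) + B (ℓ i) (g (σ i))`. For the submatrix `M i j = A (f i) (ℓ j)`, the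
weight of any `τ` plus the finite constant `∑ i, B (ℓ i) (g (σ i))` is at most the weight of
`σ ∘ τ` in `C`, with equality at `τ = 1`; so `1` is the unique optimum of `M`. The same works for
`B (ℓ i) (g (σ j))` with the constant `∑ i, A (f i) (ℓ i)`, and `ℓ` is injective because two equal
columns of `M` would give it a second optimum.
-/

open Equiv

lemma exists_tmul_eq_add {n m k : ℕ} {A : Fin n → Fin m → T} {B : Fin m → Fin k → T}
    {i : Fin n} {j : Fin k} (h : tmul A B i j ≠ ⊥) : ∃ l, tmul A B i j = A i l + B l j := by
  have hne : (Finset.univ : Finset (Fin m)).Nonempty := by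
    by_contra hempty
    exact h (by simp [tmul, Finset.not_nonempty_iff_eq_empty.1 hempty])
  obtain ⟨l, -, hl⟩ := Finset.exists_mem_eq_sup _ hne fun l => A i l + B l j
  exact ⟨l, hl⟩

lemma add_le_tmul {n m k : ℕ} (A : Fin n → Fin m → T) (B : Fin m → Fin k → T)
    (i : Fin n) (l : Fin m) (j : Fin k) : A i l + B l j ≤ tmul A B i j :=
  Finset.le_sup (f := fun l => A i l + B l j) (Finset.mem_univ l)

section NonSingular

variable {r : ℕ} {C M : Fin r → Fin r → T}

lemma NonSingular.wt_lt_s11 {σ : Perm (Fin r)} (hC : NonSingular C) (hσ : wt C σ = per C)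
    {ρ : Perm (Fin r)} (hρ : ρ ≠ σ) : wt C ρ < wt C σ := by
  obtain ⟨-, _, -, huniq⟩ := hC
  refine lt_of_le_of_ne (hσ ▸ Finset.le_sup (Finset.mem_univ ρ)) fun h => hρ ?_
  rw [huniq ρ (h.trans hσ), huniq σ hσ]

lemma nonSingular_of_forall_wt_lt {σ : Perm (Fin r)} (hσ : wt M σ ≠ ⊥)
    (hlt : ∀ ρ ≠ σ, wt M ρ < wt M σ) : NonSingular M := by
  have hper : per M = wt M σ := by
    refine le_antisymm (Finset.sup_le fun ρ _ => ?_) (Finset.le_sup (Finset.mem_univ σ))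
    rcases eq_or_ne ρ σ with rfl | hρ
    exacts [le_rfl, (hlt ρ hρ).le]
  refine ⟨hper ▸ hσ, σ, hper.symm, fun ρ hρ => ?_⟩
  by_contra hne
  exact (hlt ρ hne).ne (hρ.trans hper)

lemma NonSingular.of_wt_add_le {σ : Perm (Fin r)} {s : T} (hC : NonSingular C)
    (hσ : wt C σ = per C) (hs : s ≠ ⊥) (hle : ∀ τ, wt M τ + s ≤ wt C (τ.trans σ))
    (heq : wt M 1 + s = wt C σ) : NonSingular M := by
  refine nonSingular_of_forall_wt_lt (σ := 1) (fun h => hC.1 ?_) fun τ hτ => ?_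
  · rw [← hσ, ← heq, h, WithBot.bot_add]
  · refine (WithBot.add_lt_add_iff_right hs).1 ?_
    calc wt M τ + s ≤ wt C (τ.trans σ) := hle τ
      _ < wt C σ := hC.wt_lt_s11 hσ fun h => hτ (mul_eq_left.1 (by rwa [Perm.mul_def]))
      _ = wt M 1 + s := heq.symm

lemma NonSingular.injective_of_comp {r' : ℕ} {N : Fin r → Fin r' → T} {ℓ : Fin r → Fin r'}
    (h : NonSingular fun i j => N i (ℓ j)) : Function.Injective ℓ := by
  intro i j hij
  by_contra hne
  obtain ⟨-, σ, hσ, huniq⟩ := h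
  have hswap : wt (fun i j => N i (ℓ j)) (σ.trans (swap i j)) = wt (fun i j => N i (ℓ j)) σ := by
    have hℓ : ∀ x, ℓ (swap i j x) = ℓ x := fun x => by
      rw [swap_apply_def]; split_ifs <;> simp_all
    exact Finset.sum_congr rfl fun t _ => by simp only [trans_apply, hℓ]
  have := congrArg (· (σ.symm i)) (huniq _ (hswap.trans hσ))
  simp only [trans_apply, apply_symm_apply, swap_apply_left] at this
  exact hne this.symm

end NonSingular

lemma HasNSsub.of_tmul {n m k r : ℕ} {A : Fin n → Fin m → T} {B : Fin m → Fin k → T}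
    (h : HasNSsub (tmul A B) r) : HasNSsub A r ∧ HasNSsub B r := by
  obtain ⟨f, g, hf, hg, hC⟩ := h
  obtain ⟨σ, hσ, -⟩ := hC.2
  have hdiag : ∀ i, tmul A B (f i) (g (σ i)) ≠ ⊥ := fun i hi =>
    hσ.trans_ne hC.1 (WithBot.sum_eq_bot_iff.2 ⟨i, Finset.mem_univ i, hi⟩)
  choose ℓ hℓ using fun i => exists_tmul_eq_add (hdiag i)
  have hfin : ∀ i, A (f i) (ℓ i) ≠ ⊥ ∧ B (ℓ i) (g (σ i)) ≠ ⊥ := fun i =>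
    WithBot.add_ne_bot.1 (hℓ i ▸ hdiag i)
  have hwtσ : wt (fun i j => tmul A B (f i) (g j)) σ =
      ∑ i, A (f i) (ℓ i) + ∑ i, B (ℓ i) (g (σ i)) :=
    (Finset.sum_congr rfl fun i _ => hℓ i).trans Finset.sum_add_distrib
  have hA : NonSingular fun i j => A (f i) (ℓ j) := by
    refine hC.of_wt_add_le hσ (WithBot.sum_lt_bot fun i _ => (hfin i).2).ne' (fun τ => ?_)
      hwtσ.symm
    calc wt (fun i j => A (f i) (ℓ j)) τ + ∑ i, B (ℓ i) (g (σ i))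
        = ∑ i, (A (f i) (ℓ (τ i)) + B (ℓ (τ i)) (g (σ (τ i)))) := by
          rw [wt, ← Equiv.sum_comp τ fun i => B (ℓ i) (g (σ i)), ← Finset.sum_add_distrib]
      _ ≤ _ := Finset.sum_le_sum fun i _ => add_le_tmul A B _ _ _
  have hB : NonSingular fun i j => B (ℓ i) (g (σ j)) := by
    refine hC.of_wt_add_le hσ (WithBot.sum_lt_bot fun i _ => (hfin i).1).ne' (fun τ => ?_)
      (by rw [hwtσ, add_comm]; rfl)
    calc wt (fun i j => B (ℓ i) (g (σ j))) τ + ∑ i, A (f i) (ℓ i)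
        = ∑ i, (A (f i) (ℓ i) + B (ℓ i) (g (σ (τ i)))) := by
          rw [wt, add_comm, ← Finset.sum_add_distrib]
      _ ≤ _ := Finset.sum_le_sum fun i _ => add_le_tmul A B _ _ _
  have hℓinj : Function.Injective ℓ := hA.injective_of_comp
  exact ⟨⟨f, ℓ, hf, hℓinj, hA⟩, ⟨ℓ, g ∘ σ, hℓinj, hg.comp σ.injective, hB⟩⟩

lemma trrk_le_of_hasNSsub {n m n' m' : ℕ} {A : Fin n → Fin m → T} {B : Fin n' → Fin m' → T}
    (h : ∀ r, HasNSsub A r → HasNSsub B r) : trrk A ≤ trrk B := by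
  refine csSup_le' fun r hr => le_csSup ⟨n', fun s ⟨f, _, hf, _⟩ => ?_⟩ (h r hr)
  simpa using Fintype.card_le_of_injective f hf

/-- The tropical rank of a product is at most the minimum of the
tropical ranks of the factors. -/
theorem stmt11 {n m k : ℕ} (A : Fin n → Fin m → T) (B : Fin m → Fin k → T) :
    trrk (tmul A B) ≤ min (trrk A) (trrk B) :=
  le_min (trrk_le_of_hasNSsub fun _ h => h.of_tmul.1) (trrk_le_of_hasNSsub fun _ h => h.of_tmul.2)
end

section
/- Let A ∈ T^{n×n} with ρ(A) = 0 and assume A is torsion with A^{⊙(k+c)} = A^{⊙k} for some k, c ≥ 1. Then the powers E = A^{⊙m} with m ≥ k, c | m are tropically idempotent (E⊙E = E), and for any of the ranks tr-rk, col-rk, row-rk, the sequence rk(A^{⊙m}) is eventually constant with limit equal to tr-rk(E) = col-rk(E) = row-rk(E). -/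
/-!
For `m ≥ k` the power `X = A^m` and the idempotent `E = A^{kc}` divide each other:
`X = E ⊙ X = X ⊙ E` and `E = X ⊙ A^{mc-m} = A^{mc-m} ⊙ X`. Each rank can only drop under
multiplication, so all three ranks of `X` are those of `E`.

For an idempotent `E`, the relation `E i j + E j i = 0` splits the nodes with `E s s = 0` into
classes, and every finite entry of `E` is realised through such a node. Hence `E` factors through
the columns and rows of one representative per class. The representative submatrix has zero
diagonal, satisfies the triangle inequality and has no other zero-weight 2-cycles, so it is
non-singular; and each representative column is extremal in the column space, so a shift of it
occurs in every generating family. Thus all three ranks of `E` equal the number of classes.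
-/

open Finset

section Arithmetic

variable {ι : Type*} [Fintype ι]

lemma add_univ_sup (a : T) (f : ι → T) : a + univ.sup f = univ.sup fun i => a + f i :=
  apply_sup_eq_sup_comp_of_linearOrder (a + ·) (fun _ _ h => add_le_add_right h a) (by simp)

lemma univ_sup_add (f : ι → T) (a : T) : univ.sup f + a = univ.sup fun i => f i + a :=
  apply_sup_eq_sup_comp_of_linearOrder (· + a) (fun _ _ h => add_le_add_left h a) (by simp)

lemma exists_eq_univ_sup {f : ι → T} (h : univ.sup f ≠ ⊥) : ∃ i, f i = univ.sup f := by
  have hne : (univ : Finset ι).Nonempty := nonempty_of_ne_empty fun hu => by simp [hu] at h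
  obtain ⟨i, -, hi⟩ := exists_mem_eq_sup univ hne f
  exact ⟨i, hi.symm⟩

lemma univ_sup_indicator_add [DecidableEq ι] (f : ι → T) (j : ι) (a : T) :
    (univ.sup fun l => (if l = j then a else ⊥) + f l) = a + f j := by
  refine le_antisymm (Finset.sup_le fun l _ => ?_) (le_sup_of_le (mem_univ j) (by simp))
  split_ifs with h
  · rw [h]
  · simp

lemma nonpos_of_nsmul_nonpos {t : ℕ} (ht : t ≠ 0) {w : T} (h : t • w ≤ 0) : w ≤ 0 := by
  induction w using WithBot.recBotCoe with
  | bot => exact bot_le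
  | coe r =>
    rw [← WithBot.coe_nsmul, ← WithBot.coe_zero, WithBot.coe_le_coe] at h
    rw [← WithBot.coe_zero, WithBot.coe_le_coe]
    exact (nsmul_le_nsmul_iff_right ht).mp (by simpa using h)

lemma eq_zero_of_add_eq_self {x y : T} (hy : y ≠ ⊥) (h : x + y = y) : x = 0 :=
  WithBot.add_right_cancel hy (by rw [h, zero_add])

end Arithmetic

section MatrixAlgebra

variable {n m p q : ℕ}

lemma tmul_assoc (A : Fin n → Fin m → T) (B : Fin m → Fin p → T)
    (C : Fin p → Fin q → T) :
    tmul (tmul A B) C = tmul A (tmul B C) := by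
  funext i j
  simp only [tmul, univ_sup_add, add_univ_sup, add_assoc]
  exact Finset.sup_comm _ _ _

lemma tmul_tId (A : Fin n → Fin m → T) : tmul A (tId m) = A := by
  funext i j
  simp only [tmul, tId, add_comm (A i _)]
  simpa using univ_sup_indicator_add (A i) j 0

lemma tId_tmul (A : Fin n → Fin m → T) : tmul (tId n) A = A := by
  funext i j
  simp only [tmul, tId, eq_comm (a := i)]
  simpa using univ_sup_indicator_add (A · j) i 0

lemma tpow_add (A : Fin n → Fin n → T) (a b : ℕ) :
    tpow A (a + b) = tmul (tpow A a) (tpow A b) := by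
  induction b with
  | zero => exact (tmul_tId _).symm
  | succ b ih => rw [← add_assoc, tpow, tpow, ih, tmul_assoc]

lemma swap_tmul (A : Fin n → Fin m → T) (B : Fin m → Fin p → T) :
    Function.swap (tmul A B) = tmul (Function.swap B) (Function.swap A) := by
  funext i j
  exact Finset.sup_congr (s₁ := univ) rfl fun l _ => add_comm (A j l) (B l i)

end MatrixAlgebra

section Span

variable {n m p : ℕ}

def colSpan (A : Fin n → Fin m → T) : Set (Fin n → T) :=
  tSpan fun j i => A i j

lemma shift_mem_tSpan (v : Fin m → Fin n → T) (j : Fin m) (a : T) :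
    (fun i => a + v j i) ∈ tSpan v := by
  classical
  exact ⟨fun l => if l = j then a else ⊥,
    funext fun i => (univ_sup_indicator_add (v · i) j a).symm⟩

lemma col_mem_colSpan (A : Fin n → Fin m → T) (j : Fin m) : (fun i => A i j) ∈ colSpan A := by
  simpa [colSpan] using shift_mem_tSpan (fun j i => A i j) j 0

lemma tSpan_subset_tSpan {v : Fin m → Fin n → T} {u : Fin p → Fin n → T}
    (h : ∀ j, v j ∈ tSpan u) : tSpan v ⊆ tSpan u := by
  choose β hβ using h
  rintro _ ⟨α, rfl⟩
  refine ⟨fun l => univ.sup fun j => α j + β j l, funext fun i => ?_⟩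
  simp only [hβ, add_univ_sup, univ_sup_add, add_assoc]
  exact Finset.sup_comm _ _ _

lemma colSpan_tmul_subset (A : Fin n → Fin m → T) (B : Fin m → Fin p → T) :
    colSpan (tmul A B) ⊆ colSpan A :=
  tSpan_subset_tSpan fun j =>
    ⟨fun l => B l j, funext fun i => Finset.sup_congr rfl fun l _ => add_comm (A i l) (B l j)⟩

lemma colSpan_eq_of_factor {X : Fin n → Fin m → T} {E : Fin n → Fin p → T}
    {Y : Fin p → Fin m → T} {Z : Fin m → Fin p → T} (hX : tmul E Y = X)
    (hE : tmul X Z = E) :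
    colSpan X = colSpan E :=
  (hX ▸ colSpan_tmul_subset E Y).antisymm (hE ▸ colSpan_tmul_subset X Z)

end Span

section TropicalRank

variable {n m p q : ℕ}

lemma HasNSsub.le_card_rows {A : Fin n → Fin m → T} (h : HasNSsub A q) : q ≤ n := by
  obtain ⟨f, -, hf, -⟩ := h
  simpa using Fintype.card_le_of_injective f hf

lemma HasNSsub.le_card_cols {A : Fin n → Fin m → T} (h : HasNSsub A q) : q ≤ m := by
  obtain ⟨-, g, -, hg, -⟩ := h
  simpa using Fintype.card_le_of_injective g hg

lemma HasNSsub.le_trrk {A : Fin n → Fin m → T} (h : HasNSsub A q) : q ≤ trrk A :=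
  le_csSup ⟨n, fun _ => HasNSsub.le_card_rows⟩ h

lemma trrk_le {A : Fin n → Fin m → T} {b : ℕ} (h : ∀ q, HasNSsub A q → q ≤ b) :
    trrk A ≤ b :=
  csSup_le' h

lemma trrk_le_card_cols (A : Fin n → Fin m → T) : trrk A ≤ m :=
  trrk_le fun _ => HasNSsub.le_card_cols

lemma wt_le_per (M : Fin q → Fin q → T) (σ : Equiv.Perm (Fin q)) : wt M σ ≤ per M :=
  le_sup (f := wt M) (mem_univ σ)

lemma NonSingular.of_forall {M : Fin q → Fin q → T} {σ : Equiv.Perm (Fin q)}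
    (hσ : wt M σ ≠ ⊥) (hmax : ∀ τ, wt M τ ≤ wt M σ)
    (huniq : ∀ τ, wt M σ ≤ wt M τ → τ = σ) :
    NonSingular M := by
  have hper : per M = wt M σ := le_antisymm (Finset.sup_le fun τ _ => hmax τ) (wt_le_per M σ)
  exact ⟨hper ▸ hσ, σ, hper.symm, fun τ hτ => huniq τ (hper ▸ hτ).ge⟩

lemma sum_add_sum_le_wt_tmul (U : Fin n → Fin m → T) (V : Fin m → Fin p → T)
    (f : Fin q → Fin n) (g : Fin q → Fin p) (l : Fin q → Fin m) (σ τ : Equiv.Perm (Fin q)) :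
    (∑ a, U (f a) (l (τ a))) + ∑ a, V (l a) (g (σ a)) ≤
      wt (fun a b => tmul U V (f a) (g b)) (σ * τ) := by
  rw [← Equiv.sum_comp τ (fun a => V (l a) (g (σ a))), ← sum_add_distrib]
  exact sum_le_sum fun a _ => le_sup (f := fun x => U (f a) x + V x (g (σ (τ a)))) (mem_univ _)

/-- For the optimal permutation `σ` of the given submatrix, pick for each row `a` an index `l a`
realising the entry `(U ⊙ V) a (σ a)`; the columns `l` of `U` then carry a non-singular submatrix
with optimal permutation `1`. -/
lemma HasNSsub.of_tmul_s13 {U : Fin n → Fin m → T} {V : Fin m → Fin p → T}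
    (h : HasNSsub (tmul U V) q) : HasNSsub U q := by
  obtain ⟨f, g, hf, hg, hper, σ, hσ, huniq⟩ := h
  set M : Fin q → Fin q → T := fun a b => tmul U V (f a) (g b)
  have hfin : ∀ a, M a (σ a) ≠ ⊥ := fun a hbot => hper <| by
    rw [← hσ, wt, ← sum_erase_add _ _ (mem_univ a), hbot, WithBot.add_bot]
  choose l hl using fun a => exists_eq_univ_sup (hfin a)
  have hsplit : (∑ a, U (f a) (l a)) + ∑ a, V (l a) (g (σ a)) = per M := by
    rw [← sum_add_distrib, ← hσ]
    exact sum_congr rfl fun a _ => hl a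
  have hle : ∀ τ : Equiv.Perm (Fin q),
      (∑ a, U (f a) (l (τ a))) + ∑ a, V (l a) (g (σ a)) ≤ per M := fun τ =>
    (sum_add_sum_le_wt_tmul U V f g l σ τ).trans (wt_le_per M _)
  have hopt : ∀ τ : Equiv.Perm (Fin q),
      ∑ a, U (f a) (l a) ≤ ∑ a, U (f a) (l (τ a)) → τ = 1 := fun τ hτ =>
    mul_eq_left.mp <| huniq _ <| le_antisymm (wt_le_per M _) <| hsplit ▸
      (add_le_add_left hτ _).trans (sum_add_sum_le_wt_tmul U V f g l σ τ)
  have hl_inj : Function.Injective l := fun a b hab => by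
    by_contra hne
    have hswap : ∀ x, l (Equiv.swap a b x) = l x := fun x => by
      rcases eq_or_ne x a with rfl | hxa
      · simp [hab]
      rcases eq_or_ne x b with rfl | hxb
      · simp [hab]
      · rw [Equiv.swap_apply_of_ne_of_ne hxa hxb]
    exact hne (Equiv.swap_eq_one_iff.mp (hopt _ (by simp only [hswap, le_refl])))
  have hVfin : ∑ a, V (l a) (g (σ a)) ≠ ⊥ := fun hbot =>
    hper (by rw [← hsplit, hbot, WithBot.add_bot])
  refine ⟨f, l, hf, hl_inj, NonSingular.of_forall (σ := 1) ?_ (fun τ => ?_) hopt⟩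
  · intro hbot
    simp only [wt, Equiv.Perm.one_apply] at hbot
    exact hper (by rw [← hsplit, hbot, WithBot.bot_add])
  · exact WithBot.le_of_add_le_add_right hVfin ((hle τ).trans hsplit.ge)

lemma trrk_tmul_le_left (U : Fin n → Fin m → T) (V : Fin m → Fin p → T) :
    trrk (tmul U V) ≤ trrk U :=
  trrk_le fun _ h => h.of_tmul_s13.le_trrk

end TropicalRank

section Triangle

lemma sum_range_le_of_triangle {ι : Type*} {B : ι → ι → T}
    (htri : ∀ a b c, B a b + B b c ≤ B a c) (v : ℕ → ι) (t : ℕ) :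
    ∑ i ∈ range (t + 1), B (v i) (v (i + 1)) ≤ B (v 0) (v (t + 1)) := by
  induction t with
  | zero => simp
  | succ t ih =>
    rw [sum_range_succ]
    exact (add_le_add ih le_rfl).trans (htri _ _ _)

variable {q : ℕ} {B : Fin q → Fin q → T}

lemma orderOf_nsmul_wt (B : Fin q → Fin q → T) (σ : Equiv.Perm (Fin q)) :
    orderOf σ • wt B σ =
      ∑ x, ∑ i ∈ range (orderOf σ), B ((σ ^ i) x) ((σ ^ (i + 1)) x) := by
  have hshift : ∀ i, ∑ x, B ((σ ^ i) x) ((σ ^ (i + 1)) x) = wt B σ := fun i => by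
    simp only [pow_succ', Equiv.Perm.mul_apply]
    exact Equiv.sum_comp (σ ^ i) fun x => B x (σ x)
  rw [sum_comm]
  simp only [hshift, sum_const, card_range]

lemma sum_orbit_le (htri : ∀ a b c, B a b + B b c ≤ B a c) (σ : Equiv.Perm (Fin q))
    (x : Fin q) :
    ∑ i ∈ range (orderOf σ), B ((σ ^ i) x) ((σ ^ (i + 1)) x) ≤ B x x := by
  obtain ⟨t, ht⟩ := Nat.exists_eq_add_one.mpr (orderOf_pos σ)
  have hx : (σ ^ (t + 1)) x = x := by rw [← ht, pow_orderOf_eq_one, Equiv.Perm.one_apply]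
  simpa [ht, hx] using sum_range_le_of_triangle htri (fun i => (σ ^ i) x) t

lemma wt_nonpos_s13 (htri : ∀ a b c, B a b + B b c ≤ B a c) (hdiag : ∀ a, B a a ≤ 0)
    (σ : Equiv.Perm (Fin q)) : wt B σ ≤ 0 :=
  nonpos_of_nsmul_nonpos (orderOf_pos σ).ne' <| orderOf_nsmul_wt B σ ▸
    sum_nonpos fun x _ => (sum_orbit_le htri σ x).trans (hdiag x)

/-- Shortcutting the orbit of `a` after its first step straight back to `a` does not decrease its
weight, and every orbit weighs at most `0`. -/
lemma add_eq_zero_of_wt_eq_zero (htri : ∀ a b c, B a b + B b c ≤ B a c)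
    (hdiag : ∀ a, B a a ≤ 0) {σ : Equiv.Perm (Fin q)} (hσ : wt B σ = 0) {a : Fin q}
    (ha : σ a ≠ a) : B a (σ a) + B (σ a) a = 0 := by
  refine le_antisymm ((htri _ _ _).trans (hdiag a)) ?_
  obtain ⟨t, ht⟩ : ∃ t, orderOf σ = t + 2 := Nat.exists_eq_add_of_le' <|
    (orderOf_pos σ).nat_succ_le.lt_of_ne' fun h1 => ha (by rw [orderOf_eq_one_iff.mp h1]; rfl)
  have horbit : ∑ i ∈ range (orderOf σ), B ((σ ^ i) a) ((σ ^ (i + 1)) a) ≤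
      B a (σ a) + B (σ a) a := by
    have hback : (σ ^ (t + 2)) a = a := by rw [← ht, pow_orderOf_eq_one, Equiv.Perm.one_apply]
    have := sum_range_le_of_triangle htri (fun i => (σ ^ (i + 1)) a) t
    rw [ht, sum_range_succ', add_comm]
    simpa [hback] using add_le_add le_rfl this
  calc (0 : T) = orderOf σ • wt B σ := by rw [hσ, nsmul_zero]
    _ = ∑ i ∈ range (orderOf σ), B ((σ ^ i) a) ((σ ^ (i + 1)) a) +
          ∑ x ∈ {a}ᶜ, ∑ i ∈ range (orderOf σ), B ((σ ^ i) x) ((σ ^ (i + 1)) x) := by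
      rw [orderOf_nsmul_wt, Fintype.sum_eq_add_sum_compl a]
    _ ≤ B a (σ a) + B (σ a) a + 0 :=
      add_le_add horbit (sum_nonpos fun x _ => (sum_orbit_le htri σ x).trans (hdiag x))
    _ = _ := add_zero _

lemma nonSingular_of_triangle (htri : ∀ a b c, B a b + B b c ≤ B a c) (hdiag : ∀ a, B a a = 0)
    (hsep : ∀ a b, B a b + B b a = 0 → a = b) : NonSingular B := by
  have hdiag' : ∀ a, B a a ≤ 0 := fun a => (hdiag a).le
  have hwt1 : wt B 1 = 0 := by simp [wt, hdiag]
  refine NonSingular.of_forall (σ := 1) (by simp [hwt1])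
    (fun τ => hwt1 ▸ wt_nonpos_s13 htri hdiag' τ)
    fun τ hτ => ?_
  by_contra hne
  obtain ⟨a, ha⟩ := not_forall.mp (mt Equiv.ext hne)
  have hτ0 : wt B τ = 0 := le_antisymm (wt_nonpos_s13 htri hdiag' τ) (hwt1 ▸ hτ)
  exact ha (hsep a (τ a) (add_eq_zero_of_wt_eq_zero htri hdiag' hτ0 ha)).symm

end Triangle

section Idempotent

variable {n : ℕ} {E : Fin n → Fin n → T}

lemma add_le_of_idem (hE : tmul E E = E) (i l j : Fin n) : E i l + E l j ≤ E i j :=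
  congrFun (congrFun hE i) j ▸ le_sup (f := fun x => E i x + E x j) (mem_univ l)

lemma diag_nonpos_of_idem (hE : tmul E E = E) (s : Fin n) : E s s ≤ 0 := by
  by_cases hs : E s s = ⊥
  · exact hs ▸ bot_le
  · exact WithBot.le_of_add_le_add_right hs (by rw [zero_add]; exact add_le_of_idem hE s s s)

lemma eq_sum_range_add_of_forall {v : ℕ → Fin n} {j : Fin n}
    (hv : ∀ i, E (v i) j = E (v i) (v (i + 1)) + E (v (i + 1)) j) (t : ℕ) :
    E (v 0) j = ∑ i ∈ range t, E (v i) (v (i + 1)) + E (v t) j := by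
  induction t with
  | zero => simp
  | succ t ih => rw [ih, hv t, sum_range_succ, add_assoc]

/-- Following optimal intermediate nodes towards `j` must eventually revisit a node, and the cycle
so produced has weight `0`. -/
lemma exists_diag_eq_zero_factor (hE : tmul E E = E) {l j : Fin n} (hlj : E l j ≠ ⊥) :
    ∃ s, E s s = 0 ∧ E l j = E l s + E s j := by
  have hnext : ∀ x, ∃ y, E x j = E x y + E y j := fun x => by
    obtain ⟨y, -, hy⟩ := exists_mem_eq_sup univ ⟨l, mem_univ l⟩ fun y => E x y + E y j
    exact ⟨y, (congrFun (congrFun hE x) j).symm.trans hy⟩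
  choose g hg using hnext
  set v : ℕ → Fin n := fun i => g^[i] l
  have hv : ∀ i, E (v i) j = E (v i) (v (i + 1)) + E (v (i + 1)) j := fun i => by
    simp only [v, Function.iterate_succ_apply']
    exact hg _
  obtain ⟨a, b, hab, hvab⟩ :=
    Set.finite_univ.exists_lt_map_eq_of_forall_mem (f := v) fun _ => Set.mem_univ _
  obtain ⟨p, rfl⟩ : ∃ p, b = a + p + 1 := ⟨b - a - 1, by omega⟩
  have hpath : E l j = _ := eq_sum_range_add_of_forall hv (a + p + 1)
  have hcycle := eq_sum_range_add_of_forall (v := fun i => v (a + i)) (fun i => hv (a + i)) (p + 1)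
  simp only [add_zero, ← add_assoc, ← hvab] at hcycle
  have hsj : E (v a) j ≠ ⊥ := fun hbot => hlj (by rw [hpath, ← hvab, hbot, WithBot.add_bot])
  have hcycle0 := eq_zero_of_add_eq_self hsj hcycle.symm
  refine ⟨v a, le_antisymm (diag_nonpos_of_idem hE _) ?_, ?_⟩
  · simpa [hcycle0, ← add_assoc, ← hvab] using
      sum_range_le_of_triangle (add_le_of_idem hE) (fun i => v (a + i)) p
  · refine le_antisymm ?_ (add_le_of_idem hE _ _ _)
    rw [hpath, hvab]
    exact add_le_add (sum_range_le_of_triangle (add_le_of_idem hE) v (a + p)) le_rfl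

/-- For idempotent `E`: `i` and `j` lie in the same class of the critical graph of `E`. -/
def CritEquiv (E : Fin n → Fin n → T) (i j : Fin n) : Prop :=
  E i j + E j i = 0

lemma CritEquiv.symm {i j : Fin n} (h : CritEquiv E i j) : CritEquiv E j i := by
  rwa [CritEquiv, add_comm]

lemma CritEquiv.trans (hE : tmul E E = E) {i j l : Fin n} (hij : CritEquiv E i j)
    (hjl : CritEquiv E j l) : CritEquiv E i l := by
  refine le_antisymm ((add_le_of_idem hE i l i).trans (diag_nonpos_of_idem hE i)) ?_
  calc (0 : T) = (E i j + E j i) + (E j l + E l j) := by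
        rw [show E i j + E j i = 0 from hij, show E j l + E l j = 0 from hjl, add_zero]
    _ = (E i j + E j l) + (E l j + E j i) := by abel
    _ ≤ E i l + E l i := add_le_add (add_le_of_idem hE _ _ _) (add_le_of_idem hE _ _ _)

lemma CritEquiv.diag_eq_zero (hE : tmul E E = E) {i j : Fin n} (h : CritEquiv E i j) :
    E i i = 0 :=
  le_antisymm (diag_nonpos_of_idem hE i) (h ▸ add_le_of_idem hE i j i)

noncomputable def reps (E : Fin n → Fin n → T) : Finset (Fin n) := by
  classical
  exact univ.filter fun i => E i i = 0 ∧ ∀ j, CritEquiv E i j → i ≤ j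

lemma mem_reps {i : Fin n} : i ∈ reps E ↔ E i i = 0 ∧ ∀ j, CritEquiv E i j → i ≤ j := by
  classical
  simp [reps]

lemma eq_of_mem_reps {i j : Fin n} (hi : i ∈ reps E) (hj : j ∈ reps E) (h : CritEquiv E i j) :
    i = j :=
  le_antisymm ((mem_reps.mp hi).2 j h) ((mem_reps.mp hj).2 i h.symm)

lemma exists_mem_reps_critEquiv (hE : tmul E E = E) {s : Fin n} (hs : E s s = 0) :
    ∃ r ∈ reps E, CritEquiv E r s := by
  classical
  have hne : (univ.filter fun i => CritEquiv E i s).Nonempty :=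
    ⟨s, mem_filter.mpr ⟨mem_univ s, by rw [CritEquiv, hs, add_zero]⟩⟩
  have hmin := (mem_filter.mp (min'_mem _ hne)).2
  refine ⟨_, mem_reps.mpr ⟨hmin.diag_eq_zero hE, fun j hj => min'_le _ _ ?_⟩, hmin⟩
  exact mem_filter.mpr ⟨mem_univ j, hj.symm.trans hE hmin⟩

noncomputable def rep (E : Fin n → Fin n → T) : Fin (reps E).card → Fin n :=
  (reps E).orderEmbOfFin rfl

lemma rep_mem (a : Fin (reps E).card) : rep E a ∈ reps E :=
  orderEmbOfFin_mem _ rfl a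

lemma rep_injective : Function.Injective (rep E) :=
  ((reps E).orderEmbOfFin rfl).injective

lemma exists_rep_eq {i : Fin n} (hi : i ∈ reps E) : ∃ a, rep E a = i := by
  rw [← Set.mem_range, rep, range_orderEmbOfFin]
  exact hi

lemma rep_diag (a : Fin (reps E).card) : E (rep E a) (rep E a) = 0 :=
  (mem_reps.mp (rep_mem a)).1

lemma eq_of_critEquiv_rep {a b : Fin (reps E).card} (h : CritEquiv E (rep E a) (rep E b)) :
    a = b :=
  rep_injective (eq_of_mem_reps (rep_mem a) (rep_mem b) h)

lemma eq_univ_sup_rep (hE : tmul E E = E) (i j : Fin n) :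
    E i j = univ.sup fun a => E i (rep E a) + E (rep E a) j := by
  refine le_antisymm ?_ (Finset.sup_le fun a _ => add_le_of_idem hE _ _ _)
  by_cases hij : E i j = ⊥
  · exact hij ▸ bot_le
  obtain ⟨s, hs, hsplit⟩ := exists_diag_eq_zero_factor hE hij
  obtain ⟨r, hr, hrs⟩ := exists_mem_reps_critEquiv hE hs
  obtain ⟨a, rfl⟩ := exists_rep_eq hr
  refine le_sup_of_le (mem_univ a) ?_
  calc E i j = E i s + (E s (rep E a) + E (rep E a) s) + E s j := by
        rw [hsplit, hrs.symm, add_zero]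
    _ = (E i s + E s (rep E a)) + (E (rep E a) s + E s j) := by rw [add_assoc, add_assoc, add_assoc]
    _ ≤ _ := add_le_add (add_le_of_idem hE _ _ _) (add_le_of_idem hE _ _ _)

lemma trrk_eq_card_reps (hE : tmul E E = E) : trrk E = (reps E).card := by
  have hfactor : tmul (fun i a => E i (rep E a)) (fun a j => E (rep E a) j) = E :=
    funext fun i => funext fun j => (eq_univ_sup_rep hE i j).symm
  refine le_antisymm ?_ (HasNSsub.le_trrk ⟨rep E, rep E, rep_injective, rep_injective, ?_⟩)
  · calc trrk E = trrk (tmul (fun i a => E i (rep E a)) fun a j => E (rep E a) j) := by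
          rw [hfactor]
      _ ≤ (reps E).card := (trrk_tmul_le_left _ _).trans (trrk_le_card_cols _)
  · exact nonSingular_of_triangle (fun _ _ _ => add_le_of_idem hE _ _ _) rep_diag
      fun _ _ h => eq_of_critEquiv_rep h

end Idempotent

section WeakDimension

variable {n m : ℕ}

lemma exists_shift_eq_of_extremal {v : Fin m → Fin n → T} {u : Fin n → T} {r : Fin n}
    (hu : u ∈ tSpan v) (hr : u r = 0) (hext : ∀ y ∈ tSpan v, y ≤ u → y r = 0 → y = u) :
    ∃ j, ∃ α : ℝ, (fun i => (α : T) + v j i) = u := by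
  obtain ⟨β, rfl⟩ := hu
  simp only at hr hext
  obtain ⟨j, hj⟩ := exists_eq_univ_sup (f := fun j => β j + v j r) (by simp [hr])
  rw [hr] at hj
  have hβ : β j ≠ ⊥ := fun hbot => by simp [hbot] at hj
  obtain ⟨α, hα⟩ := WithBot.ne_bot_iff_exists.mp hβ
  refine ⟨j, α, hext _ (hα ▸ shift_mem_tSpan v j (β j)) (fun i => ?_) (hα ▸ hj)⟩
  exact hα ▸ le_sup (f := fun j => β j + v j i) (mem_univ j)

variable {E : Fin n → Fin n → T}

lemma colSpan_eq_tSpan_rep (hE : tmul E E = E) : colSpan E = tSpan fun a i => E i (rep E a) := by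
  refine (tSpan_subset_tSpan fun j => ⟨fun a => E (rep E a) j, funext fun i => ?_⟩).antisymm
    (tSpan_subset_tSpan fun a => col_mem_colSpan E (rep E a))
  rw [eq_univ_sup_rep hE]
  exact sup_congr rfl fun a _ => add_comm _ _

lemma eq_col_rep_of_le (hE : tmul E E = E) {a : Fin (reps E).card} {y : Fin n → T}
    (hy : y ∈ colSpan E) (hle : y ≤ fun i => E i (rep E a)) (hya : y (rep E a) = 0) :
    y = fun i => E i (rep E a) := by
  rw [colSpan_eq_tSpan_rep hE] at hy
  obtain ⟨γ, rfl⟩ := hy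
  simp only at hle hya
  obtain ⟨b, hb⟩ :=
    exists_eq_univ_sup (f := fun b => γ b + E (rep E a) (rep E b)) (by simp [hya])
  rw [hya] at hb
  have hγb : γ b ≤ E (rep E b) (rep E a) := by
    simpa [rep_diag] using (le_sup (f := fun c => γ c + E (rep E b) (rep E c)) (mem_univ b)).trans
      (hle (rep E b))
  have hab : a = b := eq_of_critEquiv_rep <| le_antisymm
    ((add_le_of_idem hE _ _ _).trans (diag_nonpos_of_idem hE _))
    ((hb.symm.le.trans (add_le_add hγb le_rfl)).trans_eq (add_comm _ _))
  subst hab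
  have hγa : γ a = 0 := by simpa [rep_diag] using hb
  exact le_antisymm hle fun i => le_sup_of_le (mem_univ a) (by simp [hγa])

lemma card_reps_le_of_tSpan_eq (hE : tmul E E = E) {t : ℕ} {w : Fin t → Fin n → T}
    (hw : tSpan w = colSpan E) : (reps E).card ≤ t := by
  have hshift : ∀ a, ∃ j, ∃ α : ℝ, (fun i => (α : T) + w j i) = fun i => E i (rep E a) :=
    fun a => exists_shift_eq_of_extremal
      (hw ▸ col_mem_colSpan E (rep E a)) (rep_diag a)
      fun y hy hle hya => eq_col_rep_of_le hE (hw ▸ hy) hle hya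
  choose J α hJ using hshift
  have hcol : ∀ c i, (α c : T) + w (J c) i = E i (rep E c) := fun c i => congrFun (hJ c) i
  have hJ_inj : Function.Injective J := fun a b hab => eq_of_critEquiv_rep <| by
    calc E (rep E a) (rep E b) + E (rep E b) (rep E a)
        = (α b + w (J a) (rep E a)) + (α a + w (J a) (rep E b)) := by rw [← hcol, ← hcol, hab]
      _ = (α a + w (J a) (rep E a)) + (α b + w (J b) (rep E b)) := by rw [hab]; abel
      _ = 0 := by rw [hcol, hcol, rep_diag (E := E), rep_diag (E := E), add_zero]
  simpa using Fintype.card_le_of_injective J hJ_inj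

lemma colrk_eq_card_reps (hE : tmul E E = E) : colrk E = (reps E).card :=
  le_antisymm (Nat.sInf_le ⟨_, (colSpan_eq_tSpan_rep hE).symm⟩)
    (le_csInf ⟨_, _, (colSpan_eq_tSpan_rep hE).symm⟩
      fun _ ⟨_, hw⟩ => card_reps_le_of_tSpan_eq hE hw)

lemma reps_swap : reps (Function.swap E) = reps E := by
  have hequiv : ∀ i j, CritEquiv (Function.swap E) i j ↔ CritEquiv E i j := fun i j => by
    show E j i + E i j = 0 ↔ E i j + E j i = 0
    rw [add_comm]
  ext i
  rw [mem_reps, mem_reps]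
  simp only [hequiv]

lemma rowrk_eq_card_reps (hE : tmul E E = E) : rowrk E = (reps E).card := by
  have hEt : tmul (Function.swap E) (Function.swap E) = Function.swap E := by rw [← swap_tmul, hE]
  rw [show rowrk E = colrk (Function.swap E) from rfl, colrk_eq_card_reps hEt, reps_swap]

lemma ranks_eq_card_reps (hE : tmul E E = E) :
    trrk E = (reps E).card ∧ colrk E = (reps E).card ∧ rowrk E = (reps E).card :=
  ⟨trrk_eq_card_reps hE, colrk_eq_card_reps hE, rowrk_eq_card_reps hE⟩

end WeakDimension

lemma ranks_eq_of_factor {n : ℕ} {X E Y Z : Fin n → Fin n → T} (hEX : tmul E X = X)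
    (hXE : tmul X E = X) (hXY : tmul X Y = E) (hZX : tmul Z X = E) :
    trrk X = trrk E ∧ colrk X = colrk E ∧ rowrk X = rowrk E := by
  refine ⟨le_antisymm ?_ ?_, congrArg weakDim (colSpan_eq_of_factor hEX hXY),
    congrArg weakDim (colSpan_eq_of_factor (Y := Function.swap X) (Z := Function.swap Z) ?_ ?_)⟩
  · exact hEX ▸ trrk_tmul_le_left E X
  · exact hXY ▸ trrk_tmul_le_left X Y
  · rw [← swap_tmul, hXE]
  · rw [← swap_tmul, hZX]

section Powers

variable {n : ℕ} {A : Fin n → Fin n → T} {k c : ℕ}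

lemma tpow_add_period (h : tpow A (k + c) = tpow A k) {m : ℕ} (hm : k ≤ m) :
    tpow A (m + c) = tpow A m := by
  obtain ⟨s, rfl⟩ := Nat.exists_eq_add_of_le hm
  rw [add_right_comm, tpow_add, h, ← tpow_add]

lemma tpow_add_mul_period (h : tpow A (k + c) = tpow A k) {m : ℕ} (hm : k ≤ m) (t : ℕ) :
    tpow A (m + c * t) = tpow A m := by
  induction t with
  | zero => simp
  | succ t ih =>
    rw [mul_add_one, ← add_assoc, tpow_add_period h (hm.trans (Nat.le_add_right _ _)), ih]

lemma tpow_eq_of_dvd (h : tpow A (k + c) = tpow A k) {m m' : ℕ} (hm : k ≤ m) (hm' : k ≤ m')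
    (hd : c ∣ m) (hd' : c ∣ m') : tpow A m = tpow A m' := by
  obtain ⟨s, rfl⟩ := hd
  obtain ⟨s', rfl⟩ := hd'
  rw [← tpow_add_mul_period h hm s', add_comm, tpow_add_mul_period h hm' s]

lemma tmul_tpow_self_of_dvd (h : tpow A (k + c) = tpow A k) {m : ℕ} (hm : k ≤ m)
    (hd : c ∣ m) : tmul (tpow A m) (tpow A m) = tpow A m := by
  rw [← tpow_add, tpow_eq_of_dvd h (hm.trans (Nat.le_add_right m m)) hm (dvd_add hd hd) hd]

lemma ranks_tpow_eq (h : tpow A (k + c) = tpow A k) (hc : 1 ≤ c) {m : ℕ} (hm : k ≤ m) :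
    trrk (tpow A m) = trrk (tpow A (k * c)) ∧ colrk (tpow A m) = colrk (tpow A (k * c)) ∧
      rowrk (tpow A m) = rowrk (tpow A (k * c)) := by
  have hmc : m ≤ m * c := Nat.le_mul_of_pos_right m hc
  have hE : tpow A (m * c) = tpow A (k * c) := tpow_eq_of_dvd h (hm.trans hmc)
    (Nat.le_mul_of_pos_right k hc) (dvd_mul_left c m) (dvd_mul_left c k)
  refine ranks_eq_of_factor (Y := tpow A (m * c - m)) (Z := tpow A (m * c - m)) ?_ ?_ ?_ ?_
  · rw [← tpow_add, add_comm, mul_comm, tpow_add_mul_period h hm]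
  · rw [← tpow_add, mul_comm, tpow_add_mul_period h hm]
  · rw [← tpow_add, Nat.add_sub_cancel' hmc, hE]
  · rw [← tpow_add, Nat.sub_add_cancel hmc, hE]

end Powers

theorem stmt13_general {n : ℕ} (A : Fin n → Fin n → T)
    (k c : ℕ) (hc : 1 ≤ c) (h : tpow A (k + c) = tpow A k) :
    (∀ m : ℕ, k ≤ m → c ∣ m → tmul (tpow A m) (tpow A m) = tpow A m) ∧
    ∃ d : ℕ,
      (∀ m : ℕ, k ≤ m → c ∣ m →
        trrk (tpow A m) = d ∧ colrk (tpow A m) = d ∧ rowrk (tpow A m) = d) ∧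
      ∃ N : ℕ, ∀ m : ℕ, N ≤ m →
        trrk (tpow A m) = d ∧ colrk (tpow A m) = d ∧ rowrk (tpow A m) = d := by
  set E := tpow A (k * c)
  obtain ⟨htr, hcol, hrow⟩ := ranks_eq_card_reps
    (tmul_tpow_self_of_dvd h (Nat.le_mul_of_pos_right k hc) (dvd_mul_left c k))
  have hranks : ∀ m, k ≤ m →
      trrk (tpow A m) = (reps E).card ∧ colrk (tpow A m) = (reps E).card ∧
        rowrk (tpow A m) = (reps E).card := fun m hm => by
    obtain ⟨htr_m, hcol_m, hrow_m⟩ := ranks_tpow_eq h hc hm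
    exact ⟨htr_m.trans htr, hcol_m.trans hcol, hrow_m.trans hrow⟩
  exact ⟨fun _ => tmul_tpow_self_of_dvd h, _, fun m hm _ => hranks m hm, k, hranks⟩

/-- If `ρ(A) = 0` and `A^{k+c} = A^k`, then the powers `A^m` with
`m ≥ k`, `c ∣ m` are idempotent, and all three ranks of `A^m` are eventually constant
with common value the ranks of such an idempotent power. -/
theorem stmt13 {n : ℕ} (A : Fin n → Fin n → T) (h0 : RhoEq A 0)
    (k c : ℕ) (hk : 1 ≤ k) (hc : 1 ≤ c) (h : tpow A (k + c) = tpow A k) :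
    (∀ m : ℕ, k ≤ m → c ∣ m → tmul (tpow A m) (tpow A m) = tpow A m) ∧
    ∃ d : ℕ,
      (∀ m : ℕ, k ≤ m → c ∣ m →
        trrk (tpow A m) = d ∧ colrk (tpow A m) = d ∧ rowrk (tpow A m) = d) ∧
      ∃ N : ℕ, ∀ m : ℕ, N ≤ m →
        trrk (tpow A m) = d ∧ colrk (tpow A m) = d ∧ rowrk (tpow A m) = d :=
  stmt13_general A k c hc h
end

section
/- Let A(1),…,A(ℓ) ∈ T^{n×n} each have ρ(A(i)) = 0 and ultimate rank n (critical graph a disjoint union of simple circuits covering all nodes, hence each A(i) non-singular with per(A(i)) = 0). If the product P = A(1)⊙⋯⊙A(ℓ) contains a circuit of strictly positive weight in G(P) (i.e., ρ(P) > 0), then urk(P) < n. -/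
/-!
Let `r = ρ(P)`; a circuit of positive weight forces `r > 0`. Suppose the cyclicities of the
critical components add up to at least `n`. The cyclicity of a component divides the length of
an elementary critical circuit through its representative, and these circuits are disjoint, so
they have exactly those lengths and partition the nodes: they are the cycles of a permutation `σ`
of weight `n • r`. Every permutation `π` of weight `n • r` equals `σ`: the orbits of `π` are
critical, so `π` maps each such circuit `c` into its own component, hence into `c`; and an arc
`c a → c b` of `π` with `b ≠ a + 1` would close, with the path from `c b` to `c a` along `c`, a
critical circuit whose splice into `c` has a length not divisible by the cyclicity.

On the other hand every permutation of each factor has weight `≤ 0`, and then no permutation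
of positive weight of the product is the only one of its weight. For a product `M ⊙ Q`, choose
maximizing intermediate indices row by row: either they form a permutation `τ`, and the weight
splits as `wt M τ + wt Q (τ⁻¹ π)` with the second term still positive, or two rows share an
index, and swapping their targets keeps the weight.
-/

open Finset Function Fin.NatCast

lemma Function.Periodic.sum_range_comp_add {M : Type*} [AddCommMonoid M] {f : ℕ → M} {m : ℕ}
    (hf : Periodic f m) (j : ℕ) : ∑ k ∈ range m, f (j + k) = ∑ k ∈ range m, f k := by
  induction j with
  | zero => simp
  | succ j ih =>
    rw [← ih]
    cases m with
    | zero => simp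
    | succ m =>
      rw [sum_range_succ, sum_range_succ' (fun k => f (j + k)), ← hf (j + 0)]
      simp only [add_zero, add_assoc, add_comm 1]

theorem SameScc.symm {n : ℕ} {A : Fin n → Fin n → T} {r : ℝ} {i j : Fin n}
    (h : SameScc A r i j) : SameScc A r j i :=
  ⟨h.2, h.1⟩

theorem SameScc.trans {n : ℕ} {A : Fin n → Fin n → T} {r : ℝ} {i j k : Fin n}
    (hij : SameScc A r i j) (hjk : SameScc A r j k) : SameScc A r i k :=
  ⟨Relation.ReflTransGen.trans hij.1 hjk.1, Relation.ReflTransGen.trans hjk.2 hij.2⟩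

namespace MaxPlus

variable {n : ℕ}

lemma eq_coe_of_add_eq_coe {x y : T} {p q : ℝ} (hx : x ≤ p) (hy : y ≤ q)
    (h : x + y = ((p + q : ℝ) : T)) : x = p := by
  induction x using WithBot.recBotCoe with
  | bot => exact absurd (WithBot.bot_add y ▸ h) WithBot.bot_ne_coe
  | coe v =>
    induction y using WithBot.recBotCoe with
    | bot => exact absurd (WithBot.add_bot (v : T) ▸ h) WithBot.bot_ne_coe
    | coe w =>
      norm_cast at hx hy h ⊢
      linarith

lemma eq_coe_of_sum_eq_coe {ι : Type*} {s : Finset ι} {f : ι → T} {g : ι → ℝ}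
    (hle : ∀ i ∈ s, f i ≤ g i) (h : ∑ i ∈ s, f i = ((∑ i ∈ s, g i : ℝ) : T)) {i : ι}
    (hi : i ∈ s) : f i = g i := by
  classical
  rw [← add_sum_erase s f hi, ← add_sum_erase s g hi] at h
  refine eq_coe_of_add_eq_coe (hle i hi) ?_ h
  rw [WithBot.coe_sum]
  exact sum_le_sum fun j hj => hle j (mem_of_mem_erase hj)

lemma le_coe_of_nsmul_le {x : T} {y : ℝ} {M : ℕ} (hM : M ≠ 0)
    (h : M • x ≤ ((M • y : ℝ) : T)) : x ≤ y := by
  induction x using WithBot.recBotCoe with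
  | bot => exact bot_le
  | coe v =>
    rw [← WithBot.coe_nsmul, WithBot.coe_le_coe] at h
    exact WithBot.coe_le_coe.mpr (le_of_nsmul_le_nsmul_right hM h)

noncomputable def walkWt (A : Fin n → Fin n → T) (m : ℕ) (c : ℕ → Fin n) : T :=
  ∑ k ∈ range m, A (c k) (c (k + 1))

def walkAppend (m : ℕ) (c d : ℕ → Fin n) : ℕ → Fin n :=
  fun k => if k < m then c k else d (k - m)

section Walks

variable (A : Fin n → Fin n → T)

lemma walkWt_add (p q : ℕ) (c : ℕ → Fin n) :
    walkWt A (p + q) c = walkWt A p c + walkWt A q (fun k => c (p + k)) := by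
  simp only [walkWt, sum_range_add, add_assoc]

lemma walkWt_shift {m : ℕ} {c : ℕ → Fin n} (hc : Periodic c m) (j : ℕ) :
    walkWt A m (fun k => c (j + k)) = walkWt A m c :=
  Periodic.sum_range_comp_add (f := fun k => A (c k) (c (k + 1)))
    (fun k => by simp only [hc k, add_right_comm k m 1, hc (k + 1)]) j

variable {m : ℕ} {c d : ℕ → Fin n}

lemma walkAppend_zero (h : c m = d 0) : walkAppend m c d 0 = c 0 := by
  unfold walkAppend
  split_ifs with hm
  · rfl
  · obtain rfl := Nat.eq_zero_of_not_pos hm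
    simpa using h.symm

lemma walkAppend_add (k : ℕ) : walkAppend m c d (m + k) = d k := by
  simp [walkAppend]

lemma walkWt_append (h : c m = d 0) (m' : ℕ) :
    walkWt A (m + m') (walkAppend m c d) = walkWt A m c + walkWt A m' d := by
  rw [walkWt_add]
  congr 1
  · refine sum_congr rfl fun k hk => ?_
    have hk : k < m := mem_range.mp hk
    rcases (Nat.succ_le_of_lt hk).lt_or_eq with hk1 | hk1
    · simp [walkAppend, hk, hk1]
    · subst hk1
      simp [walkAppend, h]
  · simp only [walkWt, walkAppend_add]

end Walks

def IsCritWalk (A : Fin n → Fin n → T) (r : ℝ) (m : ℕ) (c : ℕ → Fin n) : Prop :=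
  0 < m ∧ c m = c 0 ∧ walkWt A m c = (((m : ℝ) * r : ℝ) : T)

section Circuits

variable {A : Fin n → Fin n → T} {r : ℝ}

lemma apply_val_add_one {ℓ : ℕ} {c : ℕ → Fin n} (hc : c (ℓ + 1) = c 0) (k : Fin (ℓ + 1)) :
    c (k + 1 : Fin (ℓ + 1)) = c (k + 1) := by
  rw [Fin.val_add_one]
  split_ifs with hk
  · rw [hk, Fin.val_last, hc]
  · rfl

lemma cwt_eq_walkWt {ℓ : ℕ} {c : ℕ → Fin n} (hc : c (ℓ + 1) = c 0) :
    cwt A (fun k : Fin (ℓ + 1) => c k) = walkWt A (ℓ + 1) c := by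
  simp only [cwt, apply_val_add_one hc]
  exact Fin.sum_univ_eq_sum_range (fun k => A (c k) (c (k + 1))) (ℓ + 1)

lemma periodic_natCast {ℓ : ℕ} (c : Fin (ℓ + 1) → Fin n) :
    Periodic (fun k : ℕ => c (k : Fin (ℓ + 1))) (ℓ + 1) := fun k => by simp

lemma walkWt_natCast {ℓ : ℕ} (c : Fin (ℓ + 1) → Fin n) :
    walkWt A (ℓ + 1) (fun k : ℕ => c (k : Fin (ℓ + 1))) = cwt A c := by
  rw [← cwt_eq_walkWt (by simp)]
  simp only [Fin.cast_val_eq_self]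

lemma walkWt_le_of_rhoEq (hA : RhoEq A r) {m : ℕ} (hm : 0 < m) {c : ℕ → Fin n}
    (hc : c m = c 0) : walkWt A m c ≤ (((m : ℝ) * r : ℝ) : T) := by
  obtain ⟨ℓ, rfl⟩ := Nat.exists_eq_add_one_of_ne_zero hm.ne'
  simpa [← cwt_eq_walkWt hc] using hA.2 ℓ fun k => c k

lemma isCritWalk_natCast {ℓ : ℕ} {c : Fin (ℓ + 1) → Fin n}
    (hc : cwt A c = ((((ℓ : ℝ) + 1) * r : ℝ) : T)) :
    IsCritWalk A r (ℓ + 1) (fun k : ℕ => c (k : Fin (ℓ + 1))) :=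
  ⟨ℓ.succ_pos, by simp, by rw [walkWt_natCast, hc]; push_cast; rfl⟩

lemma IsCritWalk.exists_cwt_eq {m : ℕ} {c : ℕ → Fin n} (hc : IsCritWalk A r m c) :
    ∃ ℓ, m = ℓ + 1 ∧ cwt A (fun k : Fin (ℓ + 1) => c k) = ((((ℓ : ℝ) + 1) * r : ℝ) : T) := by
  obtain ⟨hm, hclosed, hwt⟩ := hc
  obtain ⟨ℓ, rfl⟩ := Nat.exists_eq_add_one_of_ne_zero hm.ne'
  exact ⟨ℓ, rfl, by rw [cwt_eq_walkWt hclosed, hwt]; push_cast; rfl⟩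

lemma IsCritWalk.of_add_eq (hA : RhoEq A r) {m₁ m₂ : ℕ} {c₁ c₂ : ℕ → Fin n}
    (hm₁ : 0 < m₁) (hc₁ : c₁ m₁ = c₁ 0) (hm₂ : 0 < m₂) (hc₂ : c₂ m₂ = c₂ 0)
    (h : walkWt A m₁ c₁ + walkWt A m₂ c₂ = ((((m₁ + m₂ : ℕ) : ℝ) * r : ℝ) : T)) :
    IsCritWalk A r m₁ c₁ := by
  refine ⟨hm₁, hc₁, eq_coe_of_add_eq_coe (walkWt_le_of_rhoEq hA hm₁ hc₁)
    (walkWt_le_of_rhoEq hA hm₂ hc₂) ?_⟩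
  rw [h]
  congr 1
  push_cast
  ring

lemma pos_of_rhoEq_of_pos_cwt (hA : RhoEq A r) {ℓ : ℕ} {c : Fin (ℓ + 1) → Fin n}
    (hc : 0 < cwt A c) : 0 < r := by
  have h := WithBot.coe_pos.mp (hc.trans_le (hA.2 ℓ c))
  exact pos_of_mul_pos_right h (by positivity)

variable {m : ℕ} {c : ℕ → Fin n}

lemma IsCritWalk.critArc (hc : IsCritWalk A r m c) {k : ℕ} (hk : k < m) :
    CritArc A r (c k) (c (k + 1)) := by
  obtain ⟨ℓ, rfl, hwt⟩ := hc.exists_cwt_eq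
  exact ⟨ℓ, _, hwt, ⟨k, hk⟩, rfl, apply_val_add_one hc.2.1 ⟨k, hk⟩⟩

lemma IsCritWalk.critReach (hc : IsCritWalk A r m c) {p q : ℕ} (hpq : p ≤ q) (hq : q ≤ m) :
    CritReach A r (c p) (c q) := by
  induction q, hpq using Nat.le_induction with
  | base => exact .refl
  | succ q hpq ih => exact (ih (by omega)).tail (hc.critArc (by omega))

lemma IsCritWalk.sameScc (hc : IsCritWalk A r m c) {k : ℕ} (hk : k ≤ m) :
    SameScc A r (c 0) (c k) :=
  ⟨hc.critReach k.zero_le hk, hc.2.1 ▸ hc.critReach hk le_rfl⟩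

lemma IsCritWalk.cycAt_dvd (hc : IsCritWalk A r m c) : cycAt A r (c 0) ∣ m := by
  obtain ⟨ℓ, rfl, hwt⟩ := hc.exists_cwt_eq
  have hdvd : ∀ d ∈ {d : ℕ | ∀ ℓ : ℕ, (∃ c' : Fin (ℓ + 1) → Fin n,
      cwt A c' = ((((ℓ : ℝ) + 1) * r : ℝ) : T) ∧ c' 0 = c 0) → d ∣ (ℓ + 1)}, d ∣ ℓ + 1 :=
    fun d hd => hd ℓ ⟨_, hwt, rfl⟩
  exact hdvd _ (Nat.sSup_mem ⟨1, fun _ _ => one_dvd _⟩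
    ⟨ℓ + 1, fun d hd => Nat.le_of_dvd ℓ.succ_pos (hdvd d hd)⟩)

lemma IsCritWalk.shortcut (hA : RhoEq A r) (hc : IsCritWalk A r m c) {a b : ℕ} (hab : a < b)
    (hb : b < m) (h : c a = c b) :
    IsCritWalk A r (a + (m - b)) (walkAppend a c fun k => c (b + k)) ∧
      walkAppend a c (fun k => c (b + k)) 0 = c 0 := by
  obtain ⟨-, hclosed, hwt⟩ := hc
  have hsplit : walkWt A m c = walkWt A a c +
      (walkWt A (b - a) (fun k => c (a + k)) + walkWt A (m - b) fun k => c (b + k)) := by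
    conv_lhs => rw [show m = a + ((b - a) + (m - b)) by omega, walkWt_add, walkWt_add]
    simp only [show ∀ k, a + (b - a + k) = b + k from fun k => by omega]
  have hloop : c (a + (b - a)) = c (a + 0) := by rw [Nat.add_sub_cancel' hab.le, add_zero, h]
  refine ⟨IsCritWalk.of_add_eq hA (m₂ := b - a) (c₂ := fun k => c (a + k)) (by omega) ?_
    (by omega) hloop ?_, walkAppend_zero h⟩
  · rw [walkAppend_add, walkAppend_zero h, show b + (m - b) = m by omega, hclosed]
  · rw [walkWt_append A h, add_right_comm, add_assoc, ← hsplit, hwt,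
      show a + (m - b) + (b - a) = m by omega]

lemma exists_isCritWalk_of_critNode {i : Fin n} (hi : CritNode A r i) :
    ∃ m c, IsCritWalk A r m c ∧ c 0 = i := by
  obtain ⟨ℓ, c, hwt, k, rfl⟩ := hi
  obtain ⟨-, -, hcwt⟩ := isCritWalk_natCast hwt
  refine ⟨ℓ + 1, fun j => c (k.val + j : ℕ), ⟨ℓ.succ_pos, by simp, ?_⟩, by simp⟩
  rw [walkWt_shift A (periodic_natCast c) k.val, hcwt]

lemma exists_injective_cwt_eq (hA : RhoEq A r) {i : Fin n} (hi : CritNode A r i) :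
    ∃ ℓ, ∃ c : Fin (ℓ + 1) → Fin n, Injective c ∧ c 0 = i ∧
      cwt A c = ((((ℓ : ℝ) + 1) * r : ℝ) : T) := by
  classical
  have hex : ∃ m c, IsCritWalk A r m c ∧ c 0 = i := exists_isCritWalk_of_critNode hi
  obtain ⟨c, hc, hci⟩ := Nat.find_spec hex
  obtain ⟨ℓ, hm, hwt⟩ := hc.exists_cwt_eq
  refine ⟨ℓ, _, .of_lt_imp_ne fun a b hab h => ?_, hci, hwt⟩
  obtain ⟨hc', hc'0⟩ := hc.shortcut hA hab (by omega) h
  exact Nat.find_min hex (show a.val + (Nat.find hex - b) < Nat.find hex by omega)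
    ⟨_, hc', hc'0.trans hci⟩

end Circuits

section Permutations

variable {A : Fin n → Fin n → T} {r : ℝ}

lemma sum_walkWt_orbit (π : Equiv.Perm (Fin n)) :
    ∑ y, walkWt A (orderOf π) (fun k => (π ^ k) y) = orderOf π • wt A π := by
  simp only [walkWt]
  rw [sum_comm, ← card_range (orderOf π), ← sum_const, card_range]
  refine sum_congr rfl fun k _ => ?_
  simp only [pow_succ', Equiv.Perm.mul_apply]
  exact Equiv.sum_comp (π ^ k) fun x => A x (π x)

lemma orbit_closed (π : Equiv.Perm (Fin n)) (y : Fin n) :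
    (π ^ orderOf π) y = (π ^ 0) y := by
  simp [pow_orderOf_eq_one]

lemma wt_le_of_rhoEq (hA : RhoEq A r) (π : Equiv.Perm (Fin n)) :
    wt A π ≤ (((n : ℝ) * r : ℝ) : T) := by
  refine le_coe_of_nsmul_le (orderOf_pos π).ne' ?_
  calc orderOf π • wt A π = ∑ y, walkWt A (orderOf π) (fun k => (π ^ k) y) :=
        (sum_walkWt_orbit π).symm
    _ ≤ ∑ _y : Fin n, (((orderOf π : ℝ) * r : ℝ) : T) :=
        sum_le_sum fun y _ => walkWt_le_of_rhoEq hA (orderOf_pos π) (orbit_closed π y)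
    _ = _ := by
        rw [← WithBot.coe_sum]
        congr 1
        simp only [sum_const, card_univ, Fintype.card_fin, nsmul_eq_mul]
        ring

lemma isCritWalk_orbit_of_wt_eq (hA : RhoEq A r) {π : Equiv.Perm (Fin n)}
    (hπ : wt A π = (((n : ℝ) * r : ℝ) : T)) (y : Fin n) :
    IsCritWalk A r (orderOf π) (fun k => (π ^ k) y) := by
  refine ⟨orderOf_pos π, orbit_closed π y, eq_coe_of_sum_eq_coe (s := univ)
    (f := fun z => walkWt A (orderOf π) fun k => (π ^ k) z)
    (fun z _ => walkWt_le_of_rhoEq hA (orderOf_pos π) (orbit_closed π z)) ?_ (mem_univ y)⟩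
  rw [sum_walkWt_orbit, hπ, ← WithBot.coe_nsmul, sum_const, card_univ, Fintype.card_fin]
  congr 1
  simp only [nsmul_eq_mul]
  ring

end Permutations

section Exchange

lemma wt_tId_nonpos (π : Equiv.Perm (Fin n)) : wt (tId n) π ≤ 0 :=
  sum_nonpos fun i _ => by unfold tId; split_ifs <;> simp

variable (M Q : Fin n → Fin n → T)

lemma sum_le_wt_tmul (π : Equiv.Perm (Fin n)) (g : Fin n → Fin n) :
    ∑ i, (M i (g i) + Q (g i) (π i)) ≤ wt (tmul M Q) π :=
  sum_le_sum fun i _ => le_sup (f := fun k => M i k + Q k (π i)) (mem_univ (g i))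

lemma exists_wt_tmul_eq_sum (π : Equiv.Perm (Fin n)) :
    ∃ g : Fin n → Fin n, wt (tmul M Q) π = ∑ i, (M i (g i) + Q (g i) (π i)) := by
  have hmax : ∀ i, ∃ k, tmul M Q i (π i) = M i k + Q k (π i) := fun i => by
    obtain ⟨k, -, hk⟩ := exists_mem_eq_sup univ ⟨i, mem_univ i⟩ fun k => M i k + Q k (π i)
    exact ⟨k, hk⟩
  choose g hg using hmax
  exact ⟨g, sum_congr rfl fun i _ => hg i⟩

lemma sum_eq_wt_add_wt (τ ρ : Equiv.Perm (Fin n)) :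
    ∑ i, (M i (τ i) + Q (τ i) ((τ.trans ρ) i)) = wt M τ + wt Q ρ := by
  rw [sum_add_distrib]
  exact congrArg _ (Equiv.sum_comp τ fun j => Q j (ρ j))

variable {M Q}

lemma exists_ne_wt_tmul_le_of_not_injective {π : Equiv.Perm (Fin n)} {g : Fin n → Fin n}
    (hg : wt (tmul M Q) π = ∑ i, (M i (g i) + Q (g i) (π i))) (hinj : ¬ Injective g) :
    ∃ π' ≠ π, wt (tmul M Q) π ≤ wt (tmul M Q) π' := by
  classical
  obtain ⟨i, j, hgij, hij⟩ := Function.not_injective_iff.mp hinj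
  refine ⟨π * Equiv.swap i j, fun h => hij (Equiv.swap_eq_one_iff.mp (mul_eq_left.mp h)), ?_⟩
  calc wt (tmul M Q) π = ∑ x, (M x (g x) + Q (g x) (π x)) := hg
    _ = ∑ x, (M x (g x) + Q (g x) ((π * Equiv.swap i j) x)) := by
        simp only [sum_add_distrib, Equiv.Perm.mul_apply]
        congr 1
        conv_rhs => enter [2, x]; rw [← Equiv.apply_swap_eq_self hgij x]
        exact (Equiv.sum_comp (Equiv.swap i j) fun x => Q (g x) (π x)).symm
    _ ≤ _ := sum_le_wt_tmul M Q _ g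

end Exchange

theorem exists_ne_wt_tProd_le (L : List (Fin n → Fin n → T))
    (hL : ∀ M ∈ L, ∀ τ, wt M τ ≤ 0) (π : Equiv.Perm (Fin n)) (hπ : 0 < wt (tProd L) π) :
    ∃ π' ≠ π, wt (tProd L) π ≤ wt (tProd L) π' := by
  induction L generalizing π with
  | nil => exact absurd hπ (wt_tId_nonpos π).not_gt
  | cons M L ih =>
    obtain ⟨g, hg⟩ := exists_wt_tmul_eq_sum M (tProd L) π
    by_cases hinj : Injective g
    swap
    · exact exists_ne_wt_tmul_le_of_not_injective hg hinj
    set τ := Equiv.ofBijective g (Finite.injective_iff_bijective.mp hinj)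
    have hsplit : wt (tProd (M :: L)) π = wt M τ + wt (tProd L) (τ.symm.trans π) := by
      rw [← sum_eq_wt_add_wt]
      simpa [τ, tProd] using hg
    have hpos : 0 < wt (tProd L) (τ.symm.trans π) :=
      hπ.trans_le (hsplit ▸ add_le_of_nonpos_left (hL M List.mem_cons_self τ))
    obtain ⟨ρ, hne, hle⟩ := ih (fun N hN => hL N (List.mem_cons_of_mem M hN)) _ hpos
    refine ⟨τ.trans ρ, fun h => hne ?_, ?_⟩
    · rw [← h]
      ext
      simp
    · calc wt (tProd (M :: L)) π = wt M τ + wt (tProd L) (τ.symm.trans π) := hsplit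
        _ ≤ wt M τ + wt (tProd L) ρ := add_le_add_right hle _
        _ = _ := (sum_eq_wt_add_wt M (tProd L) τ ρ).symm
        _ ≤ _ := sum_le_wt_tmul M (tProd L) _ g

section Chords

variable {A : Fin n → Fin n → T} {r : ℝ} {m m' : ℕ} {c z : ℕ → Fin n}

lemma IsCritWalk.cycAt_dvd_add (hc : IsCritWalk A r m c) (hz : IsCritWalk A r m' z) {b : ℕ}
    (hb : b ≤ m) (hzb : z 0 = c b) : cycAt A r (c 0) ∣ m + m' := by
  obtain ⟨hm, hclosed, hwt⟩ := hc
  obtain ⟨hm', hzclosed, hzwt⟩ := hz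
  have hjoin : z m' = (fun k => c (b + k)) 0 := hzclosed.trans hzb
  have hjoin' : c b = walkAppend m' z (fun k => c (b + k)) 0 :=
    hzb.symm.trans (walkAppend_zero hjoin).symm
  have hsplice : IsCritWalk A r (b + (m' + (m - b)))
      (walkAppend b c (walkAppend m' z fun k => c (b + k))) := by
    refine ⟨by omega, ?_, ?_⟩
    · rw [walkAppend_add, walkAppend_add, walkAppend_zero hjoin', Nat.add_sub_cancel' hb, hclosed]
    · rw [walkWt_append A hjoin', walkWt_append A hjoin, add_left_comm, ← walkWt_add,
        Nat.add_sub_cancel' hb, hwt, hzwt, ← WithBot.coe_add]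
      congr 1
      push_cast [Nat.cast_sub hb]
      ring
  have hdvd := hsplice.cycAt_dvd
  rwa [walkAppend_zero hjoin', show b + (m' + (m - b)) = m + m' by omega] at hdvd

lemma IsCritWalk.add_one_eq_of_chord (hA : RhoEq A r) {s : ℕ} (hc : IsCritWalk A r s c)
    (hper : Periodic c s) (hcyc : cycAt A r (c 0) = s) {mE : ℕ} {E : ℕ → Fin n}
    (hE : IsCritWalk A r mE E) {b d : ℕ} (hb : b < s) (hd : d < s) (hE0 : E 0 = c (b + d))
    (hE1 : E 1 = c b) : d + 1 = s := by
  obtain ⟨hs, -, hcwt⟩ := hc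
  obtain ⟨hmE, hEclosed, hEwt⟩ := hE
  -- The chord closes `c b → ⋯ → c (b + d) → c b` (length `d + 1`); the rest of the circuit `c`
  -- followed by the rest of `E` is a second closed walk, and together they weigh `(s + mE) • r`.
  have hZjoin : c (b + d) = E 0 := hE0.symm
  have hZ'join : c (b + (d + (s - d))) = E (1 + 0) := by
    rw [Nat.add_sub_cancel' hd.le, hper b, hE1]
  have hZ0 := walkAppend_zero (c := fun k => c (b + k)) hZjoin
  have hZ'0 := walkAppend_zero (c := fun k => c (b + (d + k))) (d := fun k => E (1 + k)) hZ'join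
  have hcirc : walkWt A d (fun k => c (b + k)) + walkWt A (s - d) (fun k => c (b + (d + k))) =
      (((s : ℝ) * r : ℝ) : T) := by
    rw [← walkWt_add, Nat.add_sub_cancel' hd.le, walkWt_shift A hper, hcwt]
  have hEsplit : walkWt A 1 E + walkWt A (mE - 1) (fun k => E (1 + k)) =
      (((mE : ℝ) * r : ℝ) : T) := by
    rw [← walkWt_add, Nat.add_sub_cancel' hmE, hEwt]
  have hZ := IsCritWalk.of_add_eq hA (m₁ := d + 1) (c₁ := walkAppend d (fun k => c (b + k)) E)
    (m₂ := s - d + (mE - 1))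
    (c₂ := walkAppend (s - d) (fun k => c (b + (d + k))) fun k => E (1 + k)) (by omega)
    (by rw [walkAppend_add, hZ0, hE1, add_zero]) (by omega)
    (by rw [walkAppend_add, hZ'0, Nat.add_sub_cancel' hmE, hEclosed, hE0, add_zero])
    (by rw [walkWt_append (c := fun k => c (b + k)) A hZjoin, walkWt_append
          (c := fun k => c (b + (d + k))) A hZ'join, add_add_add_comm, hcirc, hEsplit,
          ← WithBot.coe_add]
        congr 1
        push_cast [Nat.cast_sub hd.le, Nat.cast_sub hmE]
        ring)
  have hdvd := IsCritWalk.cycAt_dvd_add ⟨hs, hper.eq.trans (by simp), hcwt⟩ hZ hb.le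
    (hZ0.trans (by rw [add_zero]))
  rw [hcyc] at hdvd
  exact le_antisymm (by omega) (Nat.le_of_dvd (by omega) ((Nat.dvd_add_right dvd_rfl).mp hdvd))

lemma eq_add_one_of_isCritWalk (hA : RhoEq A r) {ℓ : ℕ}
    {c : Fin (ℓ + 1) → Fin n} (hc : cwt A c = ((((ℓ : ℝ) + 1) * r : ℝ) : T))
    (hcyc : cycAt A r (c 0) = ℓ + 1) {mE : ℕ} {E : ℕ → Fin n} (hE : IsCritWalk A r mE E)
    {a b : Fin (ℓ + 1)} (hE0 : E 0 = c a) (hE1 : E 1 = c b) : b = a + 1 := by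
  have h := (isCritWalk_natCast hc).add_one_eq_of_chord hA (periodic_natCast c)
    (by simpa using hcyc) hE b.isLt (a - b).isLt (by simp [hE0]) (by simp [hE1])
  have hlast : a - b + 1 = 0 := by
    rw [show a - b = Fin.last ℓ from Fin.ext (by simpa using h), Fin.last_add_one]
  rw [sub_add_eq_add_sub, sub_eq_zero] at hlast
  exact hlast.symm

end Chords

section Decomposition

variable {A : Fin n → Fin n → T} {r : ℝ} {ι : Type*} {ℓ : ι → ℕ}

lemma wt_permCongr_finRotate [Fintype ι] (e : (Σ i, Fin (ℓ i + 1)) ≃ Fin n) :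
    wt A (e.permCongr (Equiv.sigmaCongrRight fun i => finRotate (ℓ i + 1))) =
      ∑ i, cwt A (fun k => e ⟨i, k⟩) := by
  simp only [wt, cwt]
  rw [← Equiv.sum_comp e, Fintype.sum_sigma]
  simp [Equiv.permCongr_apply]

lemma eq_permCongr_finRotate (hA : RhoEq A r) (e : (Σ i, Fin (ℓ i + 1)) ≃ Fin n)
    (hc : ∀ i, cwt A (fun k => e ⟨i, k⟩) = ((((ℓ i : ℝ) + 1) * r : ℝ) : T))
    (hcyc : ∀ i, cycAt A r (e ⟨i, 0⟩) = ℓ i + 1)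
    (hscc : ∀ x y, SameScc A r (e x) (e y) → x.1 = y.1) {π : Equiv.Perm (Fin n)}
    (hπ : wt A π = (((n : ℝ) * r : ℝ) : T)) :
    π = e.permCongr (Equiv.sigmaCongrRight fun i => finRotate (ℓ i + 1)) := by
  ext1 u
  obtain ⟨⟨i, a⟩, rfl⟩ := e.surjective u
  obtain ⟨⟨j, b⟩, hb⟩ := e.surjective (π (e ⟨i, a⟩))
  have hE := isCritWalk_orbit_of_wt_eq hA hπ (e ⟨i, a⟩)
  obtain rfl : j = i := by
    refine (hscc ⟨i, a⟩ ⟨j, b⟩ ?_).symm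
    rw [hb]
    simpa using hE.sameScc hE.1
  have hab := eq_add_one_of_isCritWalk hA (hc j) (hcyc j) hE (a := a) (b := b) (by simp)
    (by simp [hb])
  simp [Equiv.permCongr_apply, ← hb, hab]

theorem exists_unique_wt_eq_of_le_sum_cycAt (hA : RhoEq A r) {R : Finset (Fin n)}
    (hR : SccReps A r R) (hn : n ≤ ∑ i ∈ R, cycAt A r i) :
    ∃ σ : Equiv.Perm (Fin n), wt A σ = (((n : ℝ) * r : ℝ) : T) ∧
      ∀ π, wt A π = (((n : ℝ) * r : ℝ) : T) → π = σ := by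
  choose ℓ c hinj hc0 hc using fun i : R => exists_injective_cwt_eq hA (hR.1 i i.2)
  have hscc : ∀ i : R, ∀ k, SameScc A r i (c i k) := fun i k => by
    simpa [hc0] using (isCritWalk_natCast (hc i)).sameScc k.isLt.le
  let Φ : (Σ i : R, Fin (ℓ i + 1)) → Fin n := fun x => c x.1 x.2
  have hΦ : ∀ x y, SameScc A r (Φ x) (Φ y) → x.1 = y.1 := fun x y h => by
    by_contra hne
    exact hR.2.1 x.1 x.1.2 y.1 y.1.2 (Subtype.coe_injective.ne hne)
      (((hscc _ _).trans h).trans (hscc _ _).symm)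
  have hΦinj : Injective Φ := by
    rintro ⟨i, a⟩ ⟨j, b⟩ h
    obtain rfl : i = j := hΦ ⟨i, a⟩ ⟨j, b⟩ (by rw [h]; exact ⟨.refl, .refl⟩)
    obtain rfl : a = b := hinj i h
    rfl
  have hcyc_le : ∀ i : R, cycAt A r i ≤ ℓ i + 1 := fun i =>
    Nat.le_of_dvd (ℓ i).succ_pos (by simpa [hc0] using (isCritWalk_natCast (hc i)).cycAt_dvd)
  have hcard : ∑ i : R, (ℓ i + 1) ≤ n := by
    simpa using Fintype.card_le_of_injective Φ hΦinj
  rw [← sum_coe_sort] at hn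
  have hsum_le : ∑ i : R, cycAt A r i ≤ ∑ i : R, (ℓ i + 1) := sum_le_sum fun i _ => hcyc_le i
  have hsum : ∑ i : R, (ℓ i + 1) = n := hcard.antisymm (hn.trans hsum_le)
  have hcyc : ∀ i : R, cycAt A r i = ℓ i + 1 := fun i =>
    (sum_eq_sum_iff_of_le fun i _ => hcyc_le i).mp (hsum_le.antisymm (hsum.trans_le hn)) i
      (mem_univ i)
  let e := Equiv.ofBijective Φ ((Fintype.bijective_iff_injective_and_card Φ).mpr
    ⟨hΦinj, by simp only [Fintype.card_sigma, Fintype.card_fin, hsum]⟩)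
  refine ⟨_, ?_, fun π hπ => eq_permCongr_finRotate hA e hc (fun i => by simp [e, Φ, hc0, hcyc])
    hΦ hπ⟩
  rw [wt_permCongr_finRotate]
  calc ∑ i, cwt A (fun k => e ⟨i, k⟩) = ∑ i : R, ((((ℓ i : ℝ) + 1) * r : ℝ) : T) :=
        sum_congr rfl fun i _ => hc i
    _ = _ := by
        rw [← WithBot.coe_sum, ← sum_mul]
        congr 2
        exact_mod_cast hsum

end Decomposition

end MaxPlus

open MaxPlus

theorem stmt16_general {n l : ℕ} (A : Fin l → (Fin n → Fin n → T))
    (hrho : ∀ t, RhoEq (A t) 0)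
    (P : Fin n → Fin n → T) (hP : P = tProd (List.ofFn A))
    (hpos : ∃ ℓ : ℕ, ∃ c : Fin (ℓ + 1) → Fin n, (0 : T) < cwt P c) :
    ∀ r' : ℝ, RhoEq P r' → ∀ R : Finset (Fin n), SccReps P r' R →
      (∑ i ∈ R, cycAt P r' i) < n := by
  intro r' hP' R hR
  by_contra! hn
  obtain ⟨σ, hσ, huniq⟩ := exists_unique_wt_eq_of_le_sum_cycAt hP' hR hn
  obtain ⟨ℓ, c, hc⟩ := hpos
  have hσpos : 0 < wt P σ := by
    rw [hσ, WithBot.coe_pos]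
    exact mul_pos (Nat.cast_pos.mpr (c 0).pos) (pos_of_rhoEq_of_pos_cwt hP' hc)
  have hfactors : ∀ M ∈ List.ofFn A, ∀ τ, wt M τ ≤ 0 := by
    intro M hM τ
    obtain ⟨t, rfl⟩ := List.mem_ofFn.mp hM
    simpa using wt_le_of_rhoEq (hrho t) τ
  subst hP
  obtain ⟨σ', hne, hle⟩ := exists_ne_wt_tProd_le _ hfactors σ hσpos
  exact hne (huniq σ' ((wt_le_of_rhoEq hP' σ').antisymm (hσ ▸ hle)))

/-- If each `A(t)` has `ρ = 0` and ultimate rank `n` (critical graph a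
permutation graph), and the product `P = A(1) ⊙ ⋯ ⊙ A(ℓ)` has a circuit of strictly
positive weight, then `urk(P) < n`. -/
theorem stmt16 {n l : ℕ} (A : Fin l → (Fin n → Fin n → T))
    (hrho : ∀ t, RhoEq (A t) 0)
    (hurk : ∀ t, ∃ τ : Equiv.Perm (Fin n), ∀ i j, CritArc (A t) 0 i j ↔ j = τ i)
    (P : Fin n → Fin n → T) (hP : P = tProd (List.ofFn A))
    (hpos : ∃ ℓ : ℕ, ∃ c : Fin (ℓ + 1) → Fin n, (0 : T) < cwt P c) :
    ∀ r' : ℝ, RhoEq P r' → ∀ R : Finset (Fin n), SccReps P r' R →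
      (∑ i ∈ R, cycAt P r' i) < n :=
  stmt16_general A hrho P hP hpos
end
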